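/- arXiv:2602.01197 — 8 statements merged into one kernel-verified Lean document; each statement's English description precedes it below -/
import Mathlib

section
/- Let G be a finite group, p a prime, and S a Sylow p-subgroup of G. If x and y are elements of S that are weakly closed in S with respect to G (i.e., the only G-conjugate of x lying in S is x itself, and similarly for y), then the product xy is also weakly closed in S with respect to G. -/
open Pointwise

/-- An element `x` is weakly closed in `S` with respect to `G` if the only
`G`-conjugate of `x` lying in `S` is `x` itself. -/
def IsWeaklyClosed {G : Type*} [Group G] (S : Subgroup G) (x : G) : Prop :=
  x ∈ S ∧ ∀ g : G, g⁻¹ * x * g ∈ S → g⁻¹ * x * g = x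

theorem product_of_weakly_closed {G : Type*} [Group G] [Finite G] {p : ℕ} [Fact p.Prime]
    (S : Sylow p G) (x y : G)
    (hx : IsWeaklyClosed (S : Subgroup G) x) (hy : IsWeaklyClosed (S : Subgroup G) y) :
    IsWeaklyClosed (S : Subgroup G) (x * y) := by
  obtain ⟨hxS, hxw⟩ := hx
  obtain ⟨hyS, hyw⟩ := hy
  -- `x` and `y` commute with every element of `S` (they lie in `Z(S)`)
  have hxc : ∀ s ∈ (S : Subgroup G), x * s = s * x := by
    intro s hs
    have h1 : s⁻¹ * x * s ∈ (S : Subgroup G) :=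
      mul_mem (mul_mem (inv_mem hs) hxS) hs
    have h2 := hxw s h1
    calc x * s = s * (s⁻¹ * x * s) := by group
    _ = s * x := by rw [h2]
  have hyc : ∀ s ∈ (S : Subgroup G), y * s = s * y := by
    intro s hs
    have h1 : s⁻¹ * y * s ∈ (S : Subgroup G) :=
      mul_mem (mul_mem (inv_mem hs) hyS) hs
    have h2 := hyw s h1
    calc y * s = s * (s⁻¹ * y * s) := by group
    _ = s * y := by rw [h2]
  have hxyc : ∀ s ∈ (S : Subgroup G), (x * y) * s = s * (x * y) := by
    intro s hs
    calc (x * y) * s = x * (y * s) := by group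
    _ = x * (s * y) := by rw [hyc s hs]
    _ = (x * s) * y := by group
    _ = (s * x) * y := by rw [hxc s hs]
    _ = s * (x * y) := by group
  refine ⟨mul_mem hxS hyS, ?_⟩
  intro g hz
  set z : G := g⁻¹ * (x * y) * g with hzdef
  -- `D` is the centralizer of `z`
  set D : Subgroup G := Subgroup.centralizer {z} with hD
  have hxD : x ∈ D := by
    rw [hD, Subgroup.mem_centralizer_iff]
    rintro h rfl
    exact (hxc z hz).symm
  have hyD : y ∈ D := by
    rw [hD, Subgroup.mem_centralizer_iff]
    rintro h rfl
    exact (hyc z hz).symm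
  -- the conjugate Sylow subgroup `T = g⁻¹ S g`
  set T : Sylow p G := g⁻¹ • S with hT
  have hmemT : ∀ t : G, t ∈ (T : Subgroup G) ↔ g * t * g⁻¹ ∈ S := by
    intro t
    rw [hT, Sylow.coe_subgroup_smul, Subgroup.mem_pointwise_smul_iff_inv_smul_mem]
    simp only [MulAut.smul_def, MulAut.conj_inv_apply, inv_inv]
    exact Iff.rfl
  -- `T` centralizes `z`, so `T` is a Sylow `p`-subgroup of `D`
  have hTD : (T : Subgroup G) ≤ D := by
    intro t ht
    have hs : g * t * g⁻¹ ∈ (S : Subgroup G) := (hmemT t).mp ht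
    have key := hxyc _ hs
    rw [hD, Subgroup.mem_centralizer_iff]
    rintro h rfl
    show z * t = t * z
    rw [hzdef]
    calc g⁻¹ * (x * y) * g * t = g⁻¹ * ((x * y) * (g * t * g⁻¹)) * g := by group
    _ = g⁻¹ * ((g * t * g⁻¹) * (x * y)) * g := by rw [key]
    _ = t * (g⁻¹ * (x * y) * g) := by group
  -- `⟨x, y⟩` is a `p`-subgroup of `D`
  set E : Subgroup G := Subgroup.closure {x, y} with hE
  have hExS : E ≤ (S : Subgroup G) := by
    rw [hE, Subgroup.closure_le]
    rintro w (rfl | rfl)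
    · exact hxS
    · exact hyS
  have hED : E ≤ D := by
    rw [hE, Subgroup.closure_le]
    rintro w (rfl | rfl)
    · exact hxD
    · exact hyD
  have hEpg : IsPGroup p E := S.isPGroup'.to_le hExS
  have hE'pg : IsPGroup p (E.comap D.subtype) :=
    hEpg.comap_of_injective D.subtype Subtype.coe_injective
  obtain ⟨Q, hEQ⟩ := hE'pg.exists_le_sylow
  -- conjugate `Q` to the Sylow subgroup `T` of `D`, inside `D`
  obtain ⟨u, hu⟩ := MulAction.exists_smul_eq (↥D) Q (T.subtype hTD)
  have hxE : x ∈ E := Subgroup.subset_closure (by simp)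
  have hyE : y ∈ E := Subgroup.subset_closure (by simp)
  have hxQ : (⟨x, hxD⟩ : ↥D) ∈ (Q : Subgroup ↥D) := hEQ (by simpa [Subgroup.mem_comap, Subgroup.mem_subgroupOf] using hxE)
  have hyQ : (⟨y, hyD⟩ : ↥D) ∈ (Q : Subgroup ↥D) := hEQ (by simpa [Subgroup.mem_comap, Subgroup.mem_subgroupOf] using hyE)
  -- transport membership through the conjugation
  have hmemconj : ∀ w : ↥D, w ∈ (Q : Subgroup ↥D) → ((u : G) * (w : G) * (u : G)⁻¹) ∈ (T : Subgroup G) := by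
    intro w hw
    have h1 : u * w * u⁻¹ ∈ ((T.subtype hTD : Sylow p ↥D) : Subgroup ↥D) := by
      rw [← hu, Sylow.coe_subgroup_smul, Subgroup.mem_pointwise_smul_iff_inv_smul_mem]
      have h2 : (u⁻¹ * (u * w * u⁻¹) * u : ↥D) = w := by group
      simpa only [MulAut.smul_def, MulAut.conj_inv_apply, h2] using hw
    rw [Sylow.coe_subtype, Subgroup.mem_subgroupOf] at h1
    simpa using h1
  -- hence `(g*u) x (g*u)⁻¹ ∈ S` and `(g*u) y (g*u)⁻¹ ∈ S`
  set v : G := (u : G) with hv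
  have hxconj : (g * v) * x * (g * v)⁻¹ ∈ (S : Subgroup G) := by
    have h1 := (hmemT _).mp (hmemconj _ hxQ)
    have h2 : g * (v * x * v⁻¹) * g⁻¹ = (g * v) * x * (g * v)⁻¹ := by group
    rwa [h2] at h1
  have hyconj : (g * v) * y * (g * v)⁻¹ ∈ (S : Subgroup G) := by
    have h1 := (hmemT _).mp (hmemconj _ hyQ)
    have h2 : g * (v * y * v⁻¹) * g⁻¹ = (g * v) * y * (g * v)⁻¹ := by group
    rwa [h2] at h1
  -- weak closure forces `g*u` to centralize `x` and `y`
  have hxfix : (g * v) * x * (g * v)⁻¹ = x := by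
    have h1 := hxw (g * v)⁻¹ (by rwa [inv_inv])
    rwa [inv_inv] at h1
  have hyfix : (g * v) * y * (g * v)⁻¹ = y := by
    have h1 := hyw (g * v)⁻¹ (by rwa [inv_inv])
    rwa [inv_inv] at h1
  have ccx : (g * v) * x = x * (g * v) := mul_inv_eq_iff_eq_mul.mp hxfix
  have ccy : (g * v) * y = y * (g * v) := mul_inv_eq_iff_eq_mul.mp hyfix
  have h1 : (g * v) * (x * y) = (x * y) * (g * v) := by
    calc (g * v) * (x * y) = ((g * v) * x) * y := by group
    _ = x * ((g * v) * y) := by rw [ccx]; group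
    _ = x * (y * (g * v)) := by rw [ccy]
    _ = (x * y) * (g * v) := by group
  -- `u` centralizes `z`
  have h2 : z * v = v * z := Subgroup.mem_centralizer_iff.mp u.2 z rfl
  -- conclude
  have h5 : (g * v) * z = (x * y) * (g * v) := by
    calc (g * v) * z = g * (v * z) := by group
    _ = g * (z * v) := by rw [← h2]
    _ = g * (g⁻¹ * (x * y) * g) * v := by rw [hzdef]; group
    _ = (x * y) * (g * v) := by group
  exact (mul_left_cancel (h1.trans h5.symm)).symm
end

section
/- Let G be a finite group, p a prime, and S a Sylow p-subgroup of G. The set W_G(S) of all elements of S that are weakly closed in S with respect to G is a subgroup of Z(S). -/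
open Subgroup MulAction Pointwise

set_option linter.unusedSectionVars false

section Helpers

variable {G : Type*} [Group G] {p : ℕ} [Fact p.Prime]

theorem mem_smulS {S : Sylow p G} {u ξ : G} :
    ξ ∈ (u • S : Sylow p G).toSubgroup ↔ u⁻¹ * ξ * u ∈ S.toSubgroup := by
  rw [Sylow.coe_subgroup_smul, Subgroup.mem_pointwise_smul_iff_inv_smul_mem]
  simp [MulAut.conj_inv_apply]

theorem wc_mem_centralizer {S : Sylow p G} {x : G} (hx : IsWeaklyClosed S.toSubgroup x) :
    x ∈ Subgroup.centralizer (S : Set G) := by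
  rw [Subgroup.mem_centralizer_iff]
  intro s hs
  have h1 : s⁻¹ * x * s ∈ S.toSubgroup := mul_mem (mul_mem (inv_mem hs) hx.1) hs
  have h2 := hx.2 s h1
  have h3 := congrArg (s * ·) h2
  simp only [← mul_assoc, mul_inv_cancel_left, mul_inv_cancel, one_mul] at h3
  rw [← h3]

theorem wc_unique {S : Sylow p G} {x : G} (hx : IsWeaklyClosed S.toSubgroup x) {a u : G}
    (h : a * x * a⁻¹ ∈ (u • S : Sylow p G).toSubgroup) : a * x * a⁻¹ = u * x * u⁻¹ := by
  rw [mem_smulS] at h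
  have h1 : (a⁻¹*u)⁻¹ * x * (a⁻¹*u) ∈ S.toSubgroup := by
    convert h using 1; group
  have h2 := hx.2 _ h1
  have h3 : u⁻¹ * (a * x * a⁻¹) * u = x := by
    calc u⁻¹ * (a * x * a⁻¹) * u = (a⁻¹*u)⁻¹ * x * (a⁻¹*u) := by group
      _ = x := h2
  calc a * x * a⁻¹ = u * (u⁻¹ * (a * x * a⁻¹) * u) * u⁻¹ := by group
    _ = u * x * u⁻¹ := by rw [h3]

theorem smul_le_centralizer {S : Sylow p G} {z : G} (hz : z ∈ Subgroup.centralizer (S : Set G))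
    (u : G) : (u • S : Sylow p G).toSubgroup ≤ Subgroup.centralizer {u * z * u⁻¹} := by
  intro ξ hξ
  rw [mem_smulS] at hξ
  rw [Subgroup.mem_centralizer_iff]
  rintro m rfl
  have h1 : (u⁻¹ * ξ * u) * z = z * (u⁻¹ * ξ * u) :=
    Subgroup.mem_centralizer_iff.mp hz _ hξ
  calc u * z * u⁻¹ * ξ = u * (z * (u⁻¹ * ξ * u)) * u⁻¹ := by group
    _ = u * ((u⁻¹ * ξ * u) * z) * u⁻¹ := by rw [h1]
    _ = ξ * (u * z * u⁻¹) := by group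

end Helpers


open Subgroup MulAction Pointwise

set_option linter.unusedSectionVars false

section Helpers2

variable {G : Type*} [Group G] [Finite G] {p : ℕ} [Fact p.Prime]

theorem card_lt_of_lt {A B : Subgroup G} (h : A < B) : Nat.card A < Nat.card B := by
  have hs : (A : Set G) ⊂ (B : Set G) := SetLike.lt_iff_le_and_exists.mp h |>.elim
    (fun hle ⟨u, huB, huA⟩ => (Set.ssubset_iff_of_subset hle).mpr ⟨u, huB, huA⟩)
  have := Set.ncard_lt_ncard hs (Set.toFinite _)
  rwa [← Nat.card_coe_set_eq, ← Nat.card_coe_set_eq] at this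

theorem card_smul_subgroup (h : G) (A : Subgroup G) :
    Nat.card (MulAut.conj h • A : Subgroup G) = Nat.card A :=
  (Nat.card_congr (Subgroup.equivSMul (MulAut.conj h) A).toEquiv).symm

theorem conj_into_sylow (E : Subgroup G) (P : Sylow p G) (hPE : P.toSubgroup ≤ E)
    {Q : Subgroup G} (hQE : Q ≤ E) (hQ : IsPGroup p Q) :
    ∃ e ∈ E, Q ≤ ((e • P : Sylow p G) : Subgroup G) := by
  have hQ' : IsPGroup p (Q.subgroupOf E) := hQ.comap_subtype
  obtain ⟨R, hR⟩ := hQ'.exists_le_sylow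
  obtain ⟨σ, hσ⟩ := exists_smul_eq (↥E) (P.subtype hPE) R
  refine ⟨(σ : G), σ.2, fun q hq => ?_⟩
  have h1 : (⟨q, hQE hq⟩ : E) ∈ R := hR (by simpa [Subgroup.mem_subgroupOf] using hq)
  rw [← hσ, Sylow.smul_subtype] at h1
  have h2 : (⟨q, hQE hq⟩ : E) ∈ ((σ • P).subtype (Sylow.smul_le hPE σ)).toSubgroup := h1
  rw [Sylow.coe_subtype, Subgroup.mem_subgroupOf] at h2
  simpa [Subgroup.smul_def] using h2


theorem lt_normalizer_of_pgroup {T C : Subgroup G} (hT : IsPGroup p T) (hCT : C < T) :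
    ∃ u : G, u ∈ T ∧ u ∈ Subgroup.normalizer (C : Set G) ∧ u ∉ C := by
  have hle : C ≤ T := hCT.le
  have hC' : C.subgroupOf T < ⊤ := by
    rcases lt_iff_le_and_ne.mp hCT with ⟨-, hne⟩
    refine lt_of_le_of_ne le_top (fun htop => hne ?_)
    have : T ≤ C := fun ξ hξ => by
      have : (⟨ξ, hξ⟩ : T) ∈ C.subgroupOf T := htop ▸ Subgroup.mem_top _
      exact this
    exact le_antisymm hle this
  have hnil : Group.IsNilpotent ↥T := hT.isNilpotent
  have hNC := normalizerCondition_of_isNilpotent (G := ↥T)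
  have hlt := hNC _ hC'
  obtain ⟨u', hu'N, hu'C⟩ := SetLike.exists_of_lt hlt
  refine ⟨(u' : G), u'.2, ?_, fun hc => hu'C (by simpa [Subgroup.mem_subgroupOf] using hc)⟩
  rw [Subgroup.mem_normalizer_iff]
  intro h
  constructor
  · intro hh
    have h1 : (⟨h, hle hh⟩ : T) ∈ C.subgroupOf T := by simpa [Subgroup.mem_subgroupOf] using hh
    have h2 := (Subgroup.mem_normalizer_iff.mp hu'N ⟨h, hle hh⟩).mp h1
    simpa [Subgroup.mem_subgroupOf] using h2
  · intro hh
    have hhT : h ∈ T := by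
      have : (u' : G)⁻¹ * ((u' : G) * h * (u' : G)⁻¹) * (u' : G) ∈ T :=
        mul_mem (mul_mem (inv_mem u'.2) (hle hh)) u'.2
      simpa [mul_assoc] using this
    have h1 : u' * ⟨h, hhT⟩ * u'⁻¹ ∈ C.subgroupOf T := by
      simpa [Subgroup.mem_subgroupOf] using hh
    have h2 := (Subgroup.mem_normalizer_iff.mp hu'N ⟨h, hhT⟩).mpr h1
    simpa [Subgroup.mem_subgroupOf] using h2

theorem sylow_pair_in_subgroup (H : Subgroup G) {A B : Subgroup G} (hA : A ≤ H) (hB : B ≤ H)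
    (hApg : IsPGroup p A) (hBpg : IsPGroup p B) :
    ∃ (R : Sylow p ↥H) (h : G), h ∈ H ∧ A ≤ Subgroup.map H.subtype R.toSubgroup ∧
      ∀ b ∈ B, h * b * h⁻¹ ∈ Subgroup.map H.subtype R.toSubgroup := by
  obtain ⟨R, hR⟩ := (hApg.comap_subtype (K := H)).exists_le_sylow
  obtain ⟨R₁, hR₁⟩ := (hBpg.comap_subtype (K := H)).exists_le_sylow
  obtain ⟨σ, hσ⟩ := exists_smul_eq (↥H) R₁ R
  refine ⟨R, (σ : G), σ.2, ?_, ?_⟩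
  · intro a ha
    exact ⟨⟨a, hA ha⟩, hR (by simpa [Subgroup.mem_subgroupOf] using ha), rfl⟩
  · intro b hb
    have h1 : (⟨b, hB hb⟩ : H) ∈ R₁ := hR₁ (by simpa [Subgroup.mem_subgroupOf] using hb)
    have key : σ⁻¹ * (σ * (⟨b, hB hb⟩ : H) * σ⁻¹) * σ = (⟨b, hB hb⟩ : H) := by group
    have h2 : σ * (⟨b, hB hb⟩ : H) * σ⁻¹ ∈ ((σ • R₁ : Sylow p ↥H)).toSubgroup := by
      rw [mem_smulS, key]; exact h1
    rw [hσ] at h2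
    exact ⟨_, h2, by simp⟩

end Helpers2


universe u

theorem conj_mem_centralizer_smul {G : Type*} [Group G] {p : ℕ} [Fact p.Prime]
    {S : Sylow p G} {x : G} (hxc : x ∈ Subgroup.centralizer (S : Set G)) (t : G) :
    t * x * t⁻¹ ∈ Subgroup.centralizer ((t • S : Sylow p G) : Set G) := by
  rw [Subgroup.mem_centralizer_iff]
  intro ξ hξ
  have hξ' : t⁻¹ * ξ * t ∈ S.toSubgroup := mem_smulS.mp hξ
  have h1 : (t⁻¹ * ξ * t) * x = x * (t⁻¹ * ξ * t) :=
    Subgroup.mem_centralizer_iff.mp hxc _ hξ'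
  calc ξ * (t * x * t⁻¹) = t * ((t⁻¹ * ξ * t) * x) * t⁻¹ := by group
    _ = t * (x * (t⁻¹ * ξ * t)) * t⁻¹ := by rw [h1]
    _ = t * x * t⁻¹ * ξ := by group

theorem key_wc : ∀ (n : ℕ) (G : Type u) [Group G] [Finite G] (p : ℕ) [Fact p.Prime]
    (S : Sylow p G) (x y : G), Nat.card G ≤ n → IsWeaklyClosed S.toSubgroup x →
    IsWeaklyClosed S.toSubgroup y →
    ∀ g : G, g * (x * y) * g⁻¹ ∈ S.toSubgroup → g * (x * y) * g⁻¹ = x * y := by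
  intro n
  induction n with
  | zero =>
    intro G _ _ p _ S x y hn _ _ g _
    have : 0 < Nat.card G := Nat.card_pos
    omega
  | succ n IH =>
    intro G _ _ p _ S x y hn hx hy
    have hzc : x * y ∈ Subgroup.centralizer (S : Set G) :=
      mul_mem (wc_mem_centralizer hx) (wc_mem_centralizer hy)
    set z : G := x * y with hzdef
    have B : ∀ (d : ℕ) (a t : G), a * z * a⁻¹ ∈ (t • S : Sylow p G).toSubgroup →
        Nat.card G ≤ Nat.card
          (Subgroup.centralizer {a * z * a⁻¹} ⊓ (t • S : Sylow p G).toSubgroup : Subgroup G) + d →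
        a * z * a⁻¹ = t * z * t⁻¹ := by
      intro d
      induction d using Nat.strong_induction_on with
      | _ d ihd =>
      intro a t hw hcard
      set w : G := a * z * a⁻¹ with hwdef
      set T : Subgroup G := (t • S : Sylow p G).toSubgroup with hTdef
      set C : Subgroup G := Subgroup.centralizer {w} ⊓ T with hCdef
      have hwC : w ∈ C := ⟨Subgroup.mem_centralizer_iff.mpr (by rintro m rfl; rfl), hw⟩
      -- Step 1 : find b = e * a with C ≤ b • S and b * z * b⁻¹ = w
      have haS : ((a • S : Sylow p G) : Subgroup G) ≤ Subgroup.centralizer {w} := by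
        simpa [hwdef] using smul_le_centralizer hzc a
      have hCpg : IsPGroup p C := IsPGroup.to_inf_right (t • S : Sylow p G).2
      obtain ⟨e, heE, heC⟩ :=
        conj_into_sylow (Subgroup.centralizer {w}) (a • S) haS inf_le_left hCpg
      have hbS : C ≤ ((e * a) • S : Sylow p G).toSubgroup := by
        rwa [mul_smul]
      have hew : e * w * e⁻¹ = w := by
        have h1 : w * e = e * w := Subgroup.mem_centralizer_iff.mp heE w rfl
        rw [← h1]; group
      have hbz : e * a * z * (e * a)⁻¹ = w := by
        have h0 : e * a * z * (e * a)⁻¹ = e * (a * z * a⁻¹) * e⁻¹ := by group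
        rw [h0, ← hwdef, hew]
      -- useful memberships
      have htx : t * x * t⁻¹ ∈ C := by
        refine ⟨?_, mem_smulS.mpr (by
          have h0 : t⁻¹ * (t * x * t⁻¹) * t = x := by group
          rw [h0]; exact hx.1)⟩
        have h1 := conj_mem_centralizer_smul (wc_mem_centralizer hx) t
        exact Subgroup.mem_centralizer_iff.mpr (by
          rintro m rfl
          exact Subgroup.mem_centralizer_iff.mp h1 w hw)
      have hty : t * y * t⁻¹ ∈ C := by
        refine ⟨?_, mem_smulS.mpr (by
          have h0 : t⁻¹ * (t * y * t⁻¹) * t = y := by group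
          rw [h0]; exact hy.1)⟩
        have h1 := conj_mem_centralizer_smul (wc_mem_centralizer hy) t
        exact Subgroup.mem_centralizer_iff.mpr (by
          rintro m rfl
          exact Subgroup.mem_centralizer_iff.mp h1 w hw)
      have hfinish : e * a * x * (e * a)⁻¹ = t * x * t⁻¹ →
          e * a * y * (e * a)⁻¹ = t * y * t⁻¹ → w = t * z * t⁻¹ := by
        intro h1 h2
        rw [← hbz, hzdef]
        calc e * a * (x * y) * (e * a)⁻¹
            = (e * a * x * (e * a)⁻¹) * (e * a * y * (e * a)⁻¹) := by group
          _ = (t * x * t⁻¹) * (t * y * t⁻¹) := by rw [h1, h2]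
          _ = t * (x * y) * t⁻¹ := by group
      rcases lt_or_eq_of_le (inf_le_right : C ≤ T) with hCT | hCT
      · -- C < T
        by_cases hnorm : Subgroup.normalizer (C : Set G) = ⊤
        · -- C is normal in G
          have hN : C.Normal := Subgroup.normalizer_eq_top_iff.mp hnorm
          have hxb : e * a * x * (e * a)⁻¹ ∈ C := by
            have h1 := hN.conj_mem _ htx (e * a * t⁻¹)
            have h2 : e * a * t⁻¹ * (t * x * t⁻¹) * (e * a * t⁻¹)⁻¹
                = e * a * x * (e * a)⁻¹ := by group
            rwa [h2] at h1
          have hyb : e * a * y * (e * a)⁻¹ ∈ C := by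
            have h1 := hN.conj_mem _ hty (e * a * t⁻¹)
            have h2 : e * a * t⁻¹ * (t * y * t⁻¹) * (e * a * t⁻¹)⁻¹
                = e * a * y * (e * a)⁻¹ := by group
            rwa [h2] at h1
          exact hfinish (wc_unique hx hxb.2) (wc_unique hy hyb.2)
        · -- H := normalizer C is proper
          set H : Subgroup G := Subgroup.normalizer (C : Set G) with hHdef
          have hCH : C ≤ H := Subgroup.le_normalizer
          have hcardTU : Nat.card T =
              Nat.card (((e * a) • S : Sylow p G).toSubgroup) := by
            rw [hTdef, Sylow.coe_subgroup_smul, Sylow.coe_subgroup_smul,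
              card_smul_subgroup, card_smul_subgroup]
          have hCltU : C < ((e * a) • S : Sylow p G).toSubgroup := by
            refine lt_of_le_of_ne hbS (fun hEq => ?_)
            have h1 : Nat.card C < Nat.card T := card_lt_of_lt hCT
            have h2 : Nat.card C = Nat.card (((e * a) • S : Sylow p G).toSubgroup) := by
              rw [hEq]
            omega
          -- strictly bigger normalizers
          obtain ⟨u₁, hu₁T, hu₁N, hu₁C⟩ :=
            lt_normalizer_of_pgroup (t • S : Sylow p G).2 hCT
          obtain ⟨u₂, hu₂U, hu₂N, hu₂C⟩ :=
            lt_normalizer_of_pgroup ((e * a) • S : Sylow p G).2 hCltU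
          set NT : Subgroup G := H ⊓ T with hNTdef
          set NU : Subgroup G := H ⊓ ((e * a) • S : Sylow p G).toSubgroup with hNUdef
          have hCNT : C < NT := lt_of_le_of_ne (le_inf hCH inf_le_right)
            (fun hEq => hu₁C (show u₁ ∈ C by rw [hEq]; exact ⟨hu₁N, hu₁T⟩))
          have hCNU : C < NU := lt_of_le_of_ne (le_inf hCH hbS)
            (fun hEq => hu₂C (show u₂ ∈ C by rw [hEq]; exact ⟨hu₂N, hu₂U⟩))
          obtain ⟨R, h, hhH, hRA, hRB⟩ := sylow_pair_in_subgroup H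
            (A := NT) (B := NU) inf_le_left inf_le_left
            (IsPGroup.to_le (t • S : Sylow p G).2 inf_le_right)
            (IsPGroup.to_le ((e * a) • S : Sylow p G).2 inf_le_right)
          have hRpg : IsPGroup p (Subgroup.map H.subtype R.toSubgroup) := R.2.map _
          obtain ⟨V, hV⟩ := hRpg.exists_le_sylow
          obtain ⟨τ, hτ⟩ := exists_smul_eq G S V
          have hNTV : NT ≤ V.toSubgroup := le_trans hRA hV
          have hvC : h * w * h⁻¹ ∈ C := (Subgroup.mem_normalizer_iff.mp hhH w).mp hwC
          have hvV : h * w * h⁻¹ ∈ V.toSubgroup := hNTV (le_inf hCH inf_le_right hvC)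
          -- U centralizes w
          have hUc : ((e * a) • S : Sylow p G).toSubgroup ≤ Subgroup.centralizer {w} := by
            have h0 := smul_le_centralizer hzc (e * a)
            rwa [hbz] at h0
          -- conjugates of NU land in centralizer {v} ⊓ V
          have hconj : (MulAut.conj h • NU : Subgroup G) ≤
              Subgroup.centralizer {h * w * h⁻¹} ⊓ V.toSubgroup := by
            intro m hm
            rw [Subgroup.mem_pointwise_smul_iff_inv_smul_mem] at hm
            have hm' : h⁻¹ * m * h ∈ NU := by simpa [MulAut.conj_inv_apply] using hm
            refine ⟨Subgroup.mem_centralizer_iff.mpr ?_, ?_⟩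
            · rintro μ rfl
              have h1 : w * (h⁻¹ * m * h) = (h⁻¹ * m * h) * w :=
                Subgroup.mem_centralizer_iff.mp (hUc hm'.2) w rfl
              calc (h * w * h⁻¹) * m = h * (w * (h⁻¹ * m * h)) * h⁻¹ := by group
                _ = h * ((h⁻¹ * m * h) * w) * h⁻¹ := by rw [h1]
                _ = m * (h * w * h⁻¹) := by group
            · have h0 : m = h * (h⁻¹ * m * h) * h⁻¹ := by group
              rw [h0]
              exact hV (hRB _ hm')
          -- cardinality facts
          have hcardNU : Nat.card C < Nat.card NU := card_lt_of_lt hCNU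
          have hcardNT : Nat.card C < Nat.card NT := card_lt_of_lt hCNT
          have hcardconj : Nat.card (MulAut.conj h • NU : Subgroup G) = Nat.card NU :=
            card_smul_subgroup h NU
          have hd1 : 1 ≤ d := by
            have h1 : Nat.card C < Nat.card T := card_lt_of_lt hCT
            have h2 : Nat.card T ≤ Nat.card G := Subgroup.card_le_card_group T
            omega
          have hveq : h * (e * a) * z * (h * (e * a))⁻¹ = h * w * h⁻¹ := by
            rw [← hbz]; group
          -- Step 6 : conjugate of z sitting in V with large centralizer
          have hstep6 : h * w * h⁻¹ = τ * z * τ⁻¹ := by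
            have hmem : h * (e * a) * z * (h * (e * a))⁻¹ ∈ (τ • S : Sylow p G).toSubgroup := by
              rw [hveq, hτ]; exact hvV
            have hcd : Nat.card G ≤ Nat.card
                (Subgroup.centralizer {h * (e * a) * z * (h * (e * a))⁻¹} ⊓
                  (τ • S : Sylow p G).toSubgroup : Subgroup G) + (d - 1) := by
              have hle : Nat.card (MulAut.conj h • NU : Subgroup G) ≤ Nat.card
                  (Subgroup.centralizer {h * w * h⁻¹} ⊓ V.toSubgroup : Subgroup G) :=
                Subgroup.card_le_of_le hconj
              rw [hveq, hτ]
              omega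
            have h0 := ihd (d - 1) (by omega) (h * (e * a)) τ hmem hcd
            rw [hveq] at h0; exact h0
          -- Step 7 : same element with the original Sylow T
          have hstep7 : h * w * h⁻¹ = t * z * t⁻¹ := by
            have hmem : h * (e * a) * z * (h * (e * a))⁻¹ ∈ (t • S : Sylow p G).toSubgroup := by
              rw [hveq]; exact hvC.2
            have hNTcent : NT ≤ Subgroup.centralizer
                {h * (e * a) * z * (h * (e * a))⁻¹} ⊓ (t • S : Sylow p G).toSubgroup := by
              intro m hm
              refine ⟨?_, hm.2⟩
              rw [hveq, hstep6]
              have hmV : m ∈ (τ • S : Sylow p G).toSubgroup := by rw [hτ]; exact hNTV hm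
              exact smul_le_centralizer hzc τ hmV
            have hcd : Nat.card G ≤ Nat.card
                (Subgroup.centralizer {h * (e * a) * z * (h * (e * a))⁻¹} ⊓
                  (t • S : Sylow p G).toSubgroup : Subgroup G) + (d - 1) := by
              have hle := Subgroup.card_le_of_le hNTcent
              omega
            have h0 := ihd (d - 1) (by omega) (h * (e * a)) t hmem hcd
            rw [hveq] at h0; exact h0
          -- Step 9 : induct on the group order, inside H
          have hHproper : H < ⊤ := lt_top_iff_ne_top.mpr hnorm
          have hcardH : Nat.card H ≤ n := by
            have h1 := card_lt_of_lt hHproper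
            rw [Subgroup.card_top] at h1
            omega
          have memR : ∀ {m : G} (hmC : m ∈ C), (⟨m, hCH hmC⟩ : H) ∈ R.toSubgroup := by
            intro m hmC
            obtain ⟨r, hr, hr2⟩ := hRA (le_inf hCH inf_le_right hmC)
            have h0 : (⟨m, hCH hmC⟩ : H) = r := Subtype.ext hr2.symm
            rw [h0]; exact hr
          have hWCR : ∀ (ξ : G) (hξwc : IsWeaklyClosed S.toSubgroup ξ)
              (hξC : t * ξ * t⁻¹ ∈ C),
              IsWeaklyClosed R.toSubgroup (⟨t * ξ * t⁻¹, hCH hξC⟩ : H) := by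
            intro ξ hξwc hξC
            refine ⟨memR hξC, ?_⟩
            intro η hη
            have h1 : (η : G)⁻¹ * (t * ξ * t⁻¹) * (η : G) ∈
                Subgroup.map H.subtype R.toSubgroup := ⟨_, hη, rfl⟩
            have h2 : (η : G)⁻¹ * (t * ξ * t⁻¹) * (η : G) ∈ (τ • S : Sylow p G).toSubgroup := by
              rw [hτ]; exact hV h1
            have h4 : (t⁻¹ * (η : G) * τ)⁻¹ * ξ * (t⁻¹ * (η : G) * τ) ∈ S.toSubgroup := by
              have h0 : (t⁻¹ * (η : G) * τ)⁻¹ * ξ * (t⁻¹ * (η : G) * τ) =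
                  τ⁻¹ * ((η : G)⁻¹ * (t * ξ * t⁻¹) * (η : G)) * τ := by group
              rw [h0]; exact mem_smulS.mp h2
            have h5 := hξwc.2 _ h4
            have h6 : t * ξ * t⁻¹ ∈ (τ • S : Sylow p G).toSubgroup := by
              rw [hτ]; exact hNTV (le_inf hCH inf_le_right hξC)
            have h7 : (t⁻¹ * τ)⁻¹ * ξ * (t⁻¹ * τ) ∈ S.toSubgroup := by
              have h0 : (t⁻¹ * τ)⁻¹ * ξ * (t⁻¹ * τ) = τ⁻¹ * (t * ξ * t⁻¹) * τ := by group
              rw [h0]; exact mem_smulS.mp h6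
            have h8 := hξwc.2 _ h7
            have h9 : (η : G)⁻¹ * (t * ξ * t⁻¹) * (η : G) = t * ξ * t⁻¹ := by
              have e5 : (η : G)⁻¹ * (t * ξ * t⁻¹) * (η : G) =
                  τ * ((t⁻¹ * (η : G) * τ)⁻¹ * ξ * (t⁻¹ * (η : G) * τ)) * τ⁻¹ := by group
              have e8 : t * ξ * t⁻¹ = τ * ((t⁻¹ * τ)⁻¹ * ξ * (t⁻¹ * τ)) * τ⁻¹ := by group
              rw [e5, h5, e8, h8]
            exact Subtype.ext (by
              push_cast
              simpa using h9)
          have hx' := hWCR x hx htx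
          have hy' := hWCR y hy hty
          have hmemw : ((⟨h, hhH⟩ : H))⁻¹ * ((⟨t * x * t⁻¹, hCH htx⟩ : H) *
              (⟨t * y * t⁻¹, hCH hty⟩ : H)) * ((⟨h, hhH⟩ : H))⁻¹⁻¹ = (⟨w, hCH hwC⟩ : H) := by
            apply Subtype.ext
            push_cast
            have h0 : h⁻¹ * (t * x * t⁻¹ * (t * y * t⁻¹)) * h⁻¹⁻¹ =
                h⁻¹ * (t * z * t⁻¹) * h := by rw [hzdef]; group
            rw [h0, ← hstep7]; group
          have happly := IH (↥H) p R _ _ hcardH hx' hy' ((⟨h, hhH⟩ : H))⁻¹ (by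
            rw [hmemw]; exact memR hwC)
          rw [hmemw] at happly
          have hfin : w = t * z * t⁻¹ := by
            have h0 := congrArg (fun (ν : H) => (ν : G)) happly
            push_cast at h0
            have h1 : t * x * t⁻¹ * (t * y * t⁻¹) = t * z * t⁻¹ := by rw [hzdef]; group
            rw [h1] at h0
            exact h0
          exact hfin
      · -- C = T : Sylow maximality forces equality of Sylows
        have hTle : T ≤ ((e * a) • S : Sylow p G).toSubgroup :=
          (le_of_eq hCT.symm).trans hbS
        have heqU : ((e * a) • S : Sylow p G).toSubgroup = T :=
          (t • S : Sylow p G).3 ((e * a) • S : Sylow p G).2 hTle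
        have hxmem : e * a * x * (e * a)⁻¹ ∈ T := by
          rw [← heqU]
          exact mem_smulS.mpr (by
            have h0 : (e * a)⁻¹ * (e * a * x * (e * a)⁻¹) * (e * a) = x := by group
            rw [h0]; exact hx.1)
        have hymem : e * a * y * (e * a)⁻¹ ∈ T := by
          rw [← heqU]
          exact mem_smulS.mpr (by
            have h0 : (e * a)⁻¹ * (e * a * y * (e * a)⁻¹) * (e * a) = y := by group
            rw [h0]; exact hy.1)
        exact hfinish (wc_unique hx hxmem) (wc_unique hy hymem)
    intro g hg
    have h1 : g * z * g⁻¹ ∈ ((1 : G) • S : Sylow p G).toSubgroup := by rwa [one_smul]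
    have h2 := B (Nat.card G) g 1 h1 (Nat.le_add_left _ _)
    simpa using h2


theorem wc_inv {G : Type*} [Group G] {p : ℕ} [Fact p.Prime] {S : Sylow p G} {x : G}
    (hx : IsWeaklyClosed S.toSubgroup x) : IsWeaklyClosed S.toSubgroup x⁻¹ := by
  obtain ⟨hxS, hxW⟩ := hx
  refine ⟨inv_mem hxS, fun g hg => ?_⟩
  have h1 : g⁻¹ * x * g ∈ S.toSubgroup := by
    have h0 : g⁻¹ * x * g = (g⁻¹ * x⁻¹ * g)⁻¹ := by group
    rw [h0]; exact inv_mem hg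
  have h2 := hxW g h1
  have h0 : g⁻¹ * x⁻¹ * g = (g⁻¹ * x * g)⁻¹ := by group
  rw [h0, h2]

theorem wc_mul {G : Type*} [Group G] [Finite G] {p : ℕ} [Fact p.Prime] {S : Sylow p G}
    {x y : G} (hx : IsWeaklyClosed S.toSubgroup x) (hy : IsWeaklyClosed S.toSubgroup y) :
    IsWeaklyClosed S.toSubgroup (x * y) := by
  refine ⟨mul_mem hx.1 hy.1, fun g hg => ?_⟩
  have h1 : g⁻¹ * (x * y) * (g⁻¹)⁻¹ ∈ S.toSubgroup := by simpa using hg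
  have h2 := key_wc (Nat.card G) G p S x y le_rfl hx hy g⁻¹ h1
  simpa using h2

/-- The set of all weakly closed elements of `S` w.r.t. `G` forms a subgroup of `G`
contained in the center `Z(S)` of `S`. -/
theorem weakly_closed_is_subgroup_of_center {G : Type*} [Group G] [Finite G]
    {p : ℕ} [Fact p.Prime] (S : Sylow p G) :
    ∃ W : Subgroup G, (W : Set G) = {x : G | IsWeaklyClosed (S : Subgroup G) x} ∧
      W ≤ (S : Subgroup G) ⊓ Subgroup.centralizer (S : Set G) :=
  ⟨{ carrier := {x : G | IsWeaklyClosed (S : Subgroup G) x}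
     one_mem' := ⟨one_mem _, fun g _ => by group⟩
     inv_mem' := fun hx => wc_inv hx
     mul_mem' := fun hx hy => wc_mul hx hy }, rfl,
   fun x hx => ⟨hx.1, wc_mem_centralizer hx⟩⟩
end

section
/- Let H be a finite group, p a prime, S a Sylow p-subgroup of H, and N a normal p'-subgroup of H. Then the quotient map H → H/N restricts to an isomorphism from Z(S) onto Z(SN/N). -/
/-- For a normal `p'`-subgroup `N` of `H` and a Sylow `p`-subgroup `S`, the quotient
map `H → H/N` restricts to a bijection from `Z(S)` onto `Z(SN/N)`. -/
theorem center_iso_mod_pPrime {H : Type*} [Group H] [Finite H] {p : ℕ} [Fact p.Prime]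
    (S : Sylow p H) (N : Subgroup H) [N.Normal] (hN : (Nat.card N).Coprime p) :
    Set.BijOn (QuotientGroup.mk' N)
      (((S : Subgroup H) ⊓ Subgroup.centralizer (S : Set H) : Subgroup H) : Set H)
      ((((S : Subgroup H).map (QuotientGroup.mk' N)) ⊓
        Subgroup.centralizer (((S : Subgroup H).map (QuotientGroup.mk' N) : Subgroup (H ⧸ N)) :
          Set (H ⧸ N)) : Subgroup (H ⧸ N)) : Set (H ⧸ N)) := by
  obtain ⟨n, hn⟩ := IsPGroup.iff_card.mp S.isPGroup'
  have hdisj : (S : Subgroup H) ⊓ N = ⊥ := by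
    apply Subgroup.inf_eq_bot_of_coprime
    rw [hn]
    exact Nat.Coprime.pow_left n hN.symm
  have key : ∀ x ∈ (S : Subgroup H), x ∈ N → x = 1 := by
    intro x hx hxN
    have : x ∈ (S : Subgroup H) ⊓ N := ⟨hx, hxN⟩
    rwa [hdisj, Subgroup.mem_bot] at this
  refine ⟨?_, ?_, ?_⟩
  · rintro x ⟨hxS, hxC⟩
    refine ⟨⟨x, hxS, rfl⟩, Subgroup.mem_centralizer_iff.mpr ?_⟩
    rintro _ ⟨y, hy, rfl⟩
    have := Subgroup.mem_centralizer_iff.mp hxC y hy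
    simp only [QuotientGroup.mk'_apply, ← QuotientGroup.mk_mul, this]
  · rintro x ⟨hxS, _⟩ y ⟨hyS, _⟩ hxy
    have hmem : x⁻¹ * y ∈ N := by
      rwa [QuotientGroup.mk'_apply, QuotientGroup.mk'_apply, QuotientGroup.eq] at hxy
    have h1 : x⁻¹ * y = 1 := key _ (mul_mem (inv_mem hxS) hyS) hmem
    exact inv_mul_eq_one.mp h1
  · rintro z ⟨hzmap, hzC⟩
    obtain ⟨x, hxS, rfl⟩ := Subgroup.mem_map.mp hzmap
    refine ⟨x, ⟨hxS, Subgroup.mem_centralizer_iff.mpr ?_⟩, rfl⟩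
    intro s hs
    have hc : QuotientGroup.mk' N s * QuotientGroup.mk' N x
        = QuotientGroup.mk' N x * QuotientGroup.mk' N s :=
      Subgroup.mem_centralizer_iff.mp hzC _ ⟨s, hs, rfl⟩
    have hcN : s * x * s⁻¹ * x⁻¹ ∈ N := by
      rw [← QuotientGroup.eq_one_iff]
      have : (QuotientGroup.mk' N) (s * x * s⁻¹ * x⁻¹) = 1 := by
        simp only [map_mul, map_inv]
        rw [hc]
        group
      simpa using this
    have hcS : s * x * s⁻¹ * x⁻¹ ∈ (S : Subgroup H) :=
      mul_mem (mul_mem (mul_mem hs hxS) (inv_mem hs)) (inv_mem hxS)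
    have h1 : s * x * s⁻¹ * x⁻¹ = 1 := key _ hcS hcN
    have : s * x * s⁻¹ * x⁻¹ * (x * s) = 1 * (x * s) := by rw [h1]
    simpa [mul_assoc] using this
end

section
/- Let H be a finite group, p a prime, S a Sylow p-subgroup of H, and N a normal p'-subgroup of H. Then the quotient map H → H/N restricts to an isomorphism from W_H(S) onto W_{H/N}(SN/N). -/
open Pointwise


/-- For a normal `p'`-subgroup `N` of `H` and a Sylow `p`-subgroup `S`, the quotient
map `H → H/N` restricts to a bijection from `W_H(S)` onto `W_{H/N}(SN/N)`. -/
theorem weakly_closed_iso_mod_pPrime {H : Type*} [Group H] [Finite H] {p : ℕ} [Fact p.Prime]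
    (S : Sylow p H) (N : Subgroup H) [N.Normal] (hN : (Nat.card N).Coprime p) :
    Set.BijOn (QuotientGroup.mk' N)
      {x : H | IsWeaklyClosed (S : Subgroup H) x}
      {y : H ⧸ N | IsWeaklyClosed ((S : Subgroup H).map (QuotientGroup.mk' N)) y} := by
  have hSN : (S : Subgroup H) ⊓ N = ⊥ := by
    apply Subgroup.inf_eq_bot_of_coprime
    rw [S.card_eq_multiplicity]
    exact Nat.Coprime.pow_left _ hN.symm
  refine ⟨?_, ?_, ?_⟩
  · -- MapsTo
    rintro x ⟨hxS, hwc⟩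
    refine ⟨Subgroup.mem_map_of_mem _ hxS, ?_⟩
    intro gq hg
    obtain ⟨g, rfl⟩ := QuotientGroup.mk'_surjective N gq
    have hK : g⁻¹ * x * g ∈ (S : Subgroup H) ⊔ N := by
      have h1 : g⁻¹ * x * g ∈ Subgroup.comap (QuotientGroup.mk' N)
          ((S : Subgroup H).map (QuotientGroup.mk' N)) := by
        simpa only [Subgroup.mem_comap, map_mul, map_inv] using hg
      rwa [Subgroup.comap_map_eq, QuotientGroup.ker_mk'] at h1
    set K := (S : Subgroup H) ⊔ N with hKdef
    have hSK : (S : Subgroup H) ≤ K := le_sup_left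
    let S' : Sylow p K := S.subtype hSK
    let x' : K := ⟨g⁻¹ * x * g, hK⟩
    have hx'p : IsPGroup p (Subgroup.zpowers x') := by
      obtain ⟨k, hk⟩ := S.2 ⟨x, hxS⟩
      have hx'pow : x' ^ (p ^ k) = 1 := by
        have hxpow : x ^ (p ^ k) = 1 := congrArg Subtype.val hk
        ext
        show (g⁻¹ * x * g) ^ (p ^ k) = 1
        rw [show g⁻¹ * x * g = g⁻¹ * x * g⁻¹⁻¹ by group, conj_pow, hxpow]
        group
      obtain ⟨j, _, hj⟩ := (Nat.dvd_prime_pow Fact.out).mp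
        (orderOf_dvd_of_pow_eq_one hx'pow)
      exact IsPGroup.of_card (by rw [Nat.card_zpowers, hj])
    obtain ⟨Q, hQ⟩ := hx'p.exists_le_sylow
    obtain ⟨k, hk⟩ := MulAction.exists_smul_eq K Q S'
    have hx'Q : x' ∈ Q := hQ (Subgroup.mem_zpowers x')
    have hkx : k * x' * k⁻¹ ∈ S' := by
      rw [← hk, ← SetLike.mem_coe, Sylow.coe_smul]
      exact Set.smul_mem_smul_set (a := MulAut.conj k) hx'Q
    have hkxS : (k : H) * (g⁻¹ * x * g) * (k : H)⁻¹ ∈ (S : Subgroup H) := by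
      have := hkx
      change (k * x' * k⁻¹ : K) ∈ (S : Subgroup H).subgroupOf K at this
      rw [Subgroup.mem_subgroupOf] at this
      simpa using this
    have hx_eq : g⁻¹ * x * g = (k : H)⁻¹ * x * (k : H) := by
      have e1 : (g * (k : H)⁻¹)⁻¹ * x * (g * (k : H)⁻¹) =
          (k : H) * (g⁻¹ * x * g) * (k : H)⁻¹ := by group
      have h2 := hwc (g * (k : H)⁻¹) (by rw [e1]; exact hkxS)
      have h3 : (k : H) * (g⁻¹ * x * g) * (k : H)⁻¹ = x := by rw [← e1]; exact h2
      have e2 : (k : H)⁻¹ * ((k : H) * (g⁻¹ * x * g) * (k : H)⁻¹) * (k : H) =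
          g⁻¹ * x * g := by group
      rw [← e2, h3]
    -- k ∈ S * N
    have hkSN : (k : H) ∈ (((S : Subgroup H) : Set H)) * ((N : Subgroup H) : Set H) := by
      rw [← Subgroup.mul_normal]; exact k.2
    obtain ⟨s, hs, n, hn, hsn⟩ := hkSN
    have hsx : s⁻¹ * x * s = x :=
      hwc s (Subgroup.mul_mem _ (Subgroup.mul_mem _ (Subgroup.inv_mem _ hs) hxS) hs)
    show (QuotientGroup.mk' N g)⁻¹ * QuotientGroup.mk' N x * QuotientGroup.mk' N g
        = QuotientGroup.mk' N x
    have : (QuotientGroup.mk' N g)⁻¹ * QuotientGroup.mk' N x * QuotientGroup.mk' N g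
        = QuotientGroup.mk' N (g⁻¹ * x * g) := by simp
    rw [this, hx_eq, ← hsn]
    calc QuotientGroup.mk' N ((s * n)⁻¹ * x * (s * n))
        = QuotientGroup.mk' N ((s * n)⁻¹ * x * (s * n)) := rfl
      _ = QuotientGroup.mk' N (s⁻¹ * x * s) := by
          simp only [map_mul, map_inv, mul_inv_rev]
          rw [show (QuotientGroup.mk' N) n = 1 from (QuotientGroup.eq_one_iff n).mpr hn]
          group
      _ = QuotientGroup.mk' N x := by rw [hsx]
  · -- InjOn
    rintro x ⟨hxS, -⟩ y ⟨hyS, -⟩ hxy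
    rw [QuotientGroup.mk'_eq_mk'] at hxy
    obtain ⟨z, hz, rfl⟩ := hxy
    have h1 : z ∈ (S : Subgroup H) ⊓ N :=
      ⟨by have h := Subgroup.mul_mem _ (Subgroup.inv_mem _ hxS) hyS; rw [inv_mul_cancel_left] at h; exact h, hz⟩
    rw [hSN] at h1
    rw [h1, mul_one]
  · -- SurjOn
    rintro yq ⟨hyq, hwc⟩
    obtain ⟨y, hyS, rfl⟩ := hyq
    refine ⟨y, ⟨hyS, ?_⟩, rfl⟩
    intro g hgS
    have h1 : (QuotientGroup.mk' N g)⁻¹ * QuotientGroup.mk' N y * QuotientGroup.mk' N g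
        = QuotientGroup.mk' N y := hwc (QuotientGroup.mk' N g) (by
      simpa using Subgroup.mem_map_of_mem (QuotientGroup.mk' N) hgS)
    have h2 : QuotientGroup.mk' N (g⁻¹ * y * g) = QuotientGroup.mk' N y := by
      simpa using h1
    have h3 : y⁻¹ * (g⁻¹ * y * g) ∈ (S : Subgroup H) ⊓ N := by
      constructor
      · exact Subgroup.mul_mem _ (Subgroup.inv_mem _ hyS) hgS
      · show y⁻¹ * (g⁻¹ * y * g) ∈ N
        rw [show ((y⁻¹ * (g⁻¹ * y * g) : H) ∈ N) ↔ (QuotientGroup.mk' N) (y⁻¹ * (g⁻¹ * y * g)) = 1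
          from (QuotientGroup.eq_one_iff _).symm, map_mul, map_inv, h2]
        simp
    have h4 : y⁻¹ * (g⁻¹ * y * g) = 1 := by rw [hSN] at h3; exact h3
    have := eq_of_inv_mul_eq_one h4
    exact this.symm
end

section
/- Let H be a finite group, p a prime, and S a Sylow p-subgroup of H. If z ∈ W_H(S) and h ∈ H is such that z^h lies in SN for some normal p'-subgroup N of H, then there exists x ∈ N with z^{hx} ∈ S, and consequently z^h N = zN in H/N. -/
/-- If `z` is weakly closed in `S` w.r.t. `H`, `N` is a normal `p'`-subgroup of `H`,
and `z^h ∈ SN`, then `z^{hx} ∈ S` for some `x ∈ N`, and `z^h N = zN` in `H/N`. -/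
theorem weakly_closed_conj_into_SN {H : Type*} [Group H] [Finite H] {p : ℕ} [Fact p.Prime]
    (S : Sylow p H) (N : Subgroup H) [N.Normal] (hN : (Nat.card N).Coprime p)
    (z : H) (hz : IsWeaklyClosed (S : Subgroup H) z)
    (h : H) (hmem : h⁻¹ * z * h ∈ (S : Subgroup H) ⊔ N) :
    (∃ x ∈ N, (h * x)⁻¹ * z * (h * x) ∈ S) ∧
      QuotientGroup.mk' N (h⁻¹ * z * h) = QuotientGroup.mk' N z := by
  set K : Subgroup H := (S : Subgroup H) ⊔ N with hK
  have hSK : (S : Subgroup H) ≤ K := le_sup_left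
  obtain ⟨k, hk⟩ := S.2 ⟨z, hz.1⟩
  have hzk : z ^ (p ^ k) = 1 := by
    have := congrArg (Subtype.val) hk
    simpa using this
  set z' : K := ⟨h⁻¹ * z * h, hmem⟩ with hz'
  have hconj : ∀ m : ℕ, (h⁻¹ * z * h) ^ m = h⁻¹ * z ^ m * h := by
    intro m
    induction m with
    | zero => simp
    | succ n ih => rw [pow_succ, pow_succ, ih]; group
  have hz'pow : z' ^ (p ^ k) = 1 := by
    apply Subtype.ext
    push_cast
    rw [hconj, hzk]; group
  have hpg : IsPGroup p (Subgroup.zpowers z') := by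
    rintro ⟨g, m, rfl⟩
    exact ⟨k, by
      apply Subtype.ext
      push_cast
      rw [← zpow_natCast, ← zpow_mul, mul_comm, zpow_mul, zpow_natCast, hz'pow, one_zpow]⟩
  obtain ⟨Q, hQ⟩ := hpg.exists_le_sylow
  obtain ⟨g, hg⟩ := MulAction.exists_smul_eq K Q (S.subtype hSK)
  have hz'Q : z' ∈ Q := hQ (Subgroup.mem_zpowers z')
  have h1 : g * z' * g⁻¹ ∈ ((S.subtype hSK : Sylow p K) : Subgroup K) := by
    rw [← hg, Sylow.coe_subgroup_smul]
    have := Subgroup.smul_mem_pointwise_smul z' (MulAut.conj g) Q hz'Q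
    simpa [MulAut.smul_def] using this
  -- transfer to H
  have h2 : (g : H) * (h⁻¹ * z * h) * (g : H)⁻¹ ∈ (S : Subgroup H) := by
    rw [Sylow.coe_subtype, Subgroup.mem_subgroupOf] at h1
    simpa using h1
  -- decompose g⁻¹ = n * s
  have hg' : ((g : H))⁻¹ ∈ (↑(N ⊔ (S : Subgroup H)) : Set H) := by
    show _ ∈ (N ⊔ (S : Subgroup H))
    rw [sup_comm]
    exact K.inv_mem g.2
  rw [Subgroup.normal_mul] at hg'
  obtain ⟨n, hn, s, hs, hns⟩ := hg'
  dsimp only at hns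
  -- n⁻¹ z^h n ∈ S
  have h3 : n⁻¹ * (h⁻¹ * z * h) * n ∈ (S : Subgroup H) := by
    have h4 : (n * s)⁻¹ * (h⁻¹ * z * h) * (n * s) ∈ (S : Subgroup H) := by
      rw [hns]
      have : (g : H)⁻¹⁻¹ * (h⁻¹ * z * h) * (g:H)⁻¹ ∈ (S : Subgroup H) := by
        simpa using h2
      simpa using this
    have h5 : s⁻¹ * (n⁻¹ * (h⁻¹ * z * h) * n) * s ∈ (S : Subgroup H) := by
      have := h4
      rw [mul_inv_rev] at this
      convert this using 1
      group
    have := S.1.mul_mem (S.1.mul_mem hs h5) (S.1.inv_mem hs)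
    convert this using 1
    group
  have h6 : (h * n)⁻¹ * z * (h * n) ∈ (S : Subgroup H) := by
    rw [mul_inv_rev]
    convert h3 using 1
    group
  refine ⟨⟨n, hn, h6⟩, ?_⟩
  have h7 := hz.2 (h * n) h6
  rw [mul_inv_rev] at h7
  have h8 : h⁻¹ * z * h = n * z * n⁻¹ := by
    have hthis : n⁻¹ * (h⁻¹ * z * h) * n = z := by
      convert h7 using 1; group
    conv_rhs => rw [← hthis]
    group
  rw [h8]
  simp only [QuotientGroup.mk'_apply]
  rw [QuotientGroup.eq]
  have : (n * z * n⁻¹)⁻¹ * z = n * (z⁻¹ * n⁻¹ * z) := by group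
  rw [this]
  exact N.mul_mem hn (by simpa [mul_assoc] using Subgroup.Normal.conj_mem ‹N.Normal› n⁻¹ (N.inv_mem hn) z⁻¹)
end

section
/- Let H be a finite group, p a prime, and S a Sylow p-subgroup of H. Suppose O_{p'}(H) = 1 and Z(S) ≤ O_p(H). Then C_{Z(O_p(H))}(S) = Z(S) and C_{Z(O_p(H))}(H) = Z(S) ∩ Z(H) = W_H(S), and Z(S) splits over W_H(S), i.e., there is a subgroup K ≤ Z(S) with Z(S) = W_H(S) × K. -/
/-- `O_p(H)`: the largest normal `p`-subgroup of `H`. -/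
def pCore (p : ℕ) (H : Type*) [Group H] : Subgroup H :=
  ⨆ P ∈ {P : Subgroup H | P.Normal ∧ IsPGroup p P}, P

/-- `O_{p'}(H)`: the largest normal `p'`-subgroup of `H`. -/
def pPrimeCore (p : ℕ) (H : Type*) [Group H] : Subgroup H :=
  ⨆ P ∈ {P : Subgroup H | P.Normal ∧ (Nat.card P).Coprime p}, P

open Pointwise

section Aux
variable {H : Type*} [Group H] {p : ℕ} [Fact p.Prime]

lemma normal_pGroup_le_sylow [Finite H] {P : Subgroup H} (hN : P.Normal) (hP : IsPGroup p P)
    (S : Sylow p H) : P ≤ ↑S := by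
  obtain ⟨Q, hQ⟩ := hP.exists_le_sylow
  obtain ⟨g, hg⟩ := MulAction.exists_smul_eq H Q S
  have h1 : (MulAut.conj g • (Q : Subgroup H)) = ↑S := by
    rw [← Sylow.coe_subgroup_smul, hg]
  haveI := hN
  calc P = MulAut.conj g • P := (Subgroup.Normal.conj_smul_eq_self g P).symm
    _ ≤ MulAut.conj g • (Q : Subgroup H) :=
        Subgroup.pointwise_smul_le_pointwise_smul_iff.mpr hQ
    _ = ↑S := h1

lemma pCore_le_sylow [Finite H] (S : Sylow p H) : pCore p H ≤ ↑S :=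
  iSup₂_le fun _P hP => normal_pGroup_le_sylow hP.1 hP.2 S

omit [Fact p.Prime] in
lemma pCore_normal : (pCore p H).Normal := by
  have key : ∀ g : H, (pCore p H).map (MulAut.conj g).toMonoidHom ≤ pCore p H := by
    intro g
    rw [pCore, Subgroup.map_iSup]
    refine iSup_le fun P => ?_
    rw [Subgroup.map_iSup]
    refine iSup_le fun hP => ?_
    haveI := hP.1
    have hmap : P.map (MulAut.conj g).toMonoidHom = P := by
      have := Subgroup.Normal.conj_smul_eq_self g P
      rwa [Subgroup.pointwise_smul_def] at this
    rw [hmap]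
    exact le_iSup₂ (f := fun (P : Subgroup H)
      (_ : P ∈ {P : Subgroup H | P.Normal ∧ IsPGroup p P}) => P) P hP
  exact ⟨fun n hn g => key g ⟨n, hn, rfl⟩⟩

end Aux

/-- If `O_{p'}(H) = 1` and `Z(S) ≤ O_p(H)`, then `C_{Z(O_p(H))}(S) = Z(S)`,
`C_{Z(O_p(H))}(H) = Z(S) ∩ Z(H) = W_H(S)`, and `Z(S)` splits over `W_H(S)`. -/
theorem center_splits_of_pPrimeCore_trivial {H : Type*} [Group H] [Finite H]
    {p : ℕ} [Fact p.Prime] (S : Sylow p H)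
    (h1 : pPrimeCore p H = ⊥)
    (h2 : (S : Subgroup H) ⊓ Subgroup.centralizer (S : Set H) ≤ pCore p H) :
    (pCore p H ⊓ Subgroup.centralizer ((pCore p H : Subgroup H) : Set H)) ⊓
        Subgroup.centralizer (S : Set H) =
      (S : Subgroup H) ⊓ Subgroup.centralizer (S : Set H) ∧
    (pCore p H ⊓ Subgroup.centralizer ((pCore p H : Subgroup H) : Set H)) ⊓
        Subgroup.center H =
      ((S : Subgroup H) ⊓ Subgroup.centralizer (S : Set H)) ⊓ Subgroup.center H ∧
    ((((S : Subgroup H) ⊓ Subgroup.centralizer (S : Set H)) ⊓ Subgroup.center H : Subgroup H) :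
        Set H) = {x : H | IsWeaklyClosed (S : Subgroup H) x} ∧
    ∃ K : Subgroup H, K ≤ (S : Subgroup H) ⊓ Subgroup.centralizer (S : Set H) ∧
      (((S : Subgroup H) ⊓ Subgroup.centralizer (S : Set H)) ⊓ Subgroup.center H) ⊔ K =
        (S : Subgroup H) ⊓ Subgroup.centralizer (S : Set H) ∧
      (((S : Subgroup H) ⊓ Subgroup.centralizer (S : Set H)) ⊓ Subgroup.center H) ⊓ K = ⊥ := by
  classical
  have hprime : p.Prime := Fact.out
  have hN : (pCore p H).Normal := pCore_normal
  have hQS : pCore p H ≤ ↑S := pCore_le_sylow S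
  set Q : Subgroup H := pCore p H with hQdef
  set Zs : Subgroup H := (S : Subgroup H) ⊓ Subgroup.centralizer (S : Set H) with hZsdef
  set V : Subgroup H := Q ⊓ Subgroup.centralizer (Q : Set H) with hVdef
  set B : Subgroup H := Zs ⊓ Subgroup.center H with hBdef
  have hZsV : ∀ {x : H}, x ∈ Zs → x ∈ V := by
    rintro x ⟨hxS, hxC⟩
    exact ⟨h2 ⟨hxS, hxC⟩, Subgroup.centralizer_le (fun y hy => hQS hy) hxC⟩
  have part1 : V ⊓ Subgroup.centralizer (S : Set H) = Zs := by
    apply le_antisymm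
    · rintro x ⟨⟨hxQ, _⟩, hxC⟩
      exact ⟨hQS hxQ, hxC⟩
    · intro x hx
      exact ⟨hZsV hx, hx.2⟩
  have part2 : V ⊓ Subgroup.center H = B := by
    apply le_antisymm
    · rintro x ⟨⟨hxQ, _⟩, hxZ⟩
      exact ⟨⟨hQS hxQ, Subgroup.center_le_centralizer _ hxZ⟩, hxZ⟩
    · rintro x ⟨hxZs, hxZ⟩
      exact ⟨hZsV hxZs, hxZ⟩
  have part3 : ((B : Subgroup H) : Set H) = {x : H | IsWeaklyClosed (S : Subgroup H) x} := by
    ext x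
    simp only [SetLike.mem_coe, Set.mem_setOf_eq]
    constructor
    · intro hx
      rw [Subgroup.mem_inf, Subgroup.mem_inf] at hx
      obtain ⟨⟨hxS, -⟩, hxZ⟩ := hx
      rw [Subgroup.mem_center_iff] at hxZ
      refine ⟨hxS, fun g _ => ?_⟩
      rw [hxZ g⁻¹, mul_assoc, inv_mul_cancel, mul_one]
    · rintro ⟨hxS, hw⟩
      have hxC : x ∈ Subgroup.centralizer (S : Set H) := by
        rw [Subgroup.mem_centralizer_iff]
        intro s hs
        have h' : s⁻¹ * x * s = x := hw s (mul_mem (mul_mem (inv_mem hs) hxS) hs)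
        have h'' := congrArg (fun z => s * z) h'
        simpa [mul_assoc] using h''.symm
      have hxQ : x ∈ Q := h2 ⟨hxS, hxC⟩
      have hxZ : x ∈ Subgroup.center H := by
        rw [Subgroup.mem_center_iff]
        intro g
        have hmem : g⁻¹ * x * g ∈ Q := by simpa using hN.conj_mem x hxQ g⁻¹
        have h' : g⁻¹ * x * g = x := hw g (hQS hmem)
        have h'' := congrArg (fun z => g * z) h'
        simpa [mul_assoc] using h''.symm
      exact ⟨⟨hxS, hxC⟩, hxZ⟩
  refine ⟨part1, part2, part3, ?_⟩
  -- Part 4: the norm map argument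
  have hVconj : ∀ a g : H, a ∈ V → g * a * g⁻¹ ∈ V := by
    intro a g ha
    rw [Subgroup.mem_inf] at ha ⊢
    obtain ⟨haQ, haC⟩ := ha
    refine ⟨hN.conj_mem a haQ g, ?_⟩
    rw [Subgroup.mem_centralizer_iff]
    intro m hm
    have hm' : g⁻¹ * m * g ∈ Q := by simpa using hN.conj_mem m hm g⁻¹
    have hcomm : (g⁻¹ * m * g) * a = a * (g⁻¹ * m * g) :=
      Subgroup.mem_centralizer_iff.mp haC _ hm'
    have h'' := congrArg (fun z => g * z * g⁻¹) hcomm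
    simpa [mul_assoc] using h''
  letI : CommGroup ↥V :=
    { (inferInstance : Group ↥V) with
      mul_comm := fun a b => Subtype.ext
        (Subgroup.mem_centralizer_iff.mp b.2.2 _ a.2.1) }
  letI : Fintype (H ⧸ (S : Subgroup H)) := Fintype.ofFinite _
  set n : ℕ := Fintype.card (H ⧸ (S : Subgroup H)) with hndef
  have hfmem : ∀ (a : ↥Zs) (q : H ⧸ (S : Subgroup H)),
      q.out * (a : H) * q.out⁻¹ ∈ V := fun a q => hVconj _ _ (hZsV a.2)
  set f : ↥Zs → (H ⧸ (S : Subgroup H)) → ↥V :=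
    fun a q => ⟨q.out * (a : H) * q.out⁻¹, hfmem a q⟩ with hfdef
  set ν : ↥Zs →* ↥V :=
    { toFun := fun a => ∏ q : H ⧸ (S : Subgroup H), f a q
      map_one' := Finset.prod_eq_one fun q _ => Subtype.ext (by simp [hfdef])
      map_mul' := by
        intro a b
        rw [← Finset.prod_mul_distrib]
        exact Finset.prod_congr rfl fun q _ =>
          Subtype.ext (by simp [hfdef, mul_assoc]) } with hνdef
  have hν_apply : ∀ a : ↥Zs, ν a = ∏ q : H ⧸ (S : Subgroup H), f a q := fun a => rfl
  -- well-definedness on cosets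
  have hwd : ∀ (a : ↥Zs) (g₁ g₂ : H), (g₁ : H ⧸ (S : Subgroup H)) = (g₂ : H ⧸ (S : Subgroup H)) →
      g₁ * (a : H) * g₁⁻¹ = g₂ * (a : H) * g₂⁻¹ := by
    intro a g₁ g₂ h
    rw [QuotientGroup.eq] at h
    have hc : (g₁⁻¹ * g₂) * (a : H) = (a : H) * (g₁⁻¹ * g₂) :=
      Subgroup.mem_centralizer_iff.mp a.2.2 _ h
    have h'' := congrArg (fun z => g₁ * z * g₂⁻¹) hc
    simpa [mul_assoc] using h''.symm
  -- centrality of ν a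
  have hνcent : ∀ (a : ↥Zs) (g : H), g * (↑(ν a) : H) * g⁻¹ = ↑(ν a) := by
    intro a g
    let cg : ↥V →* ↥V :=
      { toFun := fun v => ⟨g * (v : H) * g⁻¹, hVconj _ _ v.2⟩
        map_one' := Subtype.ext (by simp)
        map_mul' := fun v w => Subtype.ext (by simp [mul_assoc]) }
    have key : cg (ν a) = ν a := by
      rw [hν_apply, map_prod]
      refine Fintype.prod_equiv (MulAction.toPerm g) _ _ fun q => ?_
      refine Subtype.ext ?_
      have h1 : ((g * q.out : H) : H ⧸ (S : Subgroup H)) =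
          (((MulAction.toPerm g q : H ⧸ (S : Subgroup H)).out : H) : H ⧸ (S : Subgroup H)) := by
        rw [QuotientGroup.out_eq']
        simpa [smul_eq_mul] using MulAction.Quotient.mk_smul_out (G := H) (H := (S : Subgroup H)) g q
      have h2' := hwd a (g * q.out) (MulAction.toPerm g q).out h1
      show g * (q.out * (a : H) * q.out⁻¹) * g⁻¹ = _
      simpa [mul_assoc, mul_inv_rev, hfdef] using h2'
    have := congrArg Subtype.val key
    exact this
  have hνB : ∀ a : ↥Zs, (↑(ν a) : H) ∈ B := by
    intro a
    have hc : (↑(ν a) : H) ∈ Subgroup.center H := by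
      rw [Subgroup.mem_center_iff]
      intro g
      have h'' := congrArg (fun z => z * g) (hνcent a g)
      simpa [mul_assoc] using h''
    exact ⟨⟨hQS (ν a).2.1, Subgroup.center_le_centralizer _ hc⟩, hc⟩
  have hνpow : ∀ a : ↥Zs, (a : H) ∈ Subgroup.center H →
      (↑(ν a) : H) = (a : H) ^ n := by
    intro a ha
    rw [Subgroup.mem_center_iff] at ha
    have hconst : ∀ q : H ⧸ (S : Subgroup H), f a q = ⟨(a : H), hZsV a.2⟩ := by
      intro q
      refine Subtype.ext ?_
      show q.out * (a : H) * q.out⁻¹ = (a : H)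
      rw [ha q.out, mul_assoc, mul_inv_cancel, mul_one]
    have : ν a = (⟨(a : H), hZsV a.2⟩ : ↥V) ^ n := by
      rw [hν_apply, Finset.prod_congr rfl fun q _ => hconst q, Finset.prod_const,
        Finset.card_univ]
    rw [this]
    rfl
  -- p does not divide n
  have hndvd : ¬ p ∣ n := by
    have h3 : ¬ p ∣ (S : Subgroup H).index := Sylow.not_dvd_index S
    rwa [Subgroup.index, Nat.card_eq_fintype_card] at h3
  have hBle : B ≤ (S : Subgroup H) := fun x hx => hx.1.1
  have hBp : IsPGroup p ↥B := S.isPGroup'.to_le hBle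
  obtain ⟨k, hk⟩ : ∃ k : ℕ, Nat.card ↥B = p ^ k := IsPGroup.iff_card.mp hBp
  have hcop : (Nat.card ↥B).Coprime n := by
    rw [hk]
    exact Nat.Coprime.pow_left _ ((Nat.Prime.coprime_iff_not_dvd hprime).mpr hndvd)
  refine ⟨ν.ker.map Zs.subtype, Subgroup.map_subtype_le _, ?_, ?_⟩
  · -- B ⊔ K = Zs
    apply le_antisymm
    · exact sup_le inf_le_left (Subgroup.map_subtype_le _)
    · intro a ha
      set w : ↥B := ⟨(↑(ν ⟨a, ha⟩) : H), hνB _⟩ with hwdef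
      let b : ↥B := (powCoprime hcop).symm w
      have hb : b ^ n = w := (powCoprime hcop).apply_symm_apply w
      have hbZs : (↑b : H) ∈ Zs := b.2.1
      have hbcen : (↑b : H) ∈ Subgroup.center H := b.2.2
      have hbeq : ν ⟨(↑b : H), hbZs⟩ = ν ⟨a, ha⟩ := by
        refine Subtype.ext ?_
        rw [hνpow ⟨(↑b : H), hbZs⟩ hbcen]
        have hcoe : ((b ^ n : ↥B) : H) = (↑b : H) ^ n := by push_cast; rfl
        rw [← hcoe, hb]
      have hker : (⟨(↑b : H), hbZs⟩ : ↥Zs)⁻¹ * ⟨a, ha⟩ ∈ ν.ker := by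
        rw [MonoidHom.mem_ker, map_mul, map_inv, hbeq]
        exact inv_mul_cancel _
      have hsplit : a = (↑b : H) * ↑((⟨(↑b : H), hbZs⟩ : ↥Zs)⁻¹ * (⟨a, ha⟩ : ↥Zs)) := by
        push_cast
        rw [← mul_assoc, mul_inv_cancel, one_mul]
      rw [hsplit]
      exact Subgroup.mul_mem_sup b.2 ⟨_, hker, rfl⟩
  · -- B ⊓ K = ⊥
    rw [eq_bot_iff]
    rintro x ⟨hxB, hxK⟩
    obtain ⟨z, hz, rfl⟩ := hxK
    replace hz : ν z = 1 := hz
    have hcen : ((z : H) : H) ∈ Subgroup.center H := hxB.2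
    have hpow : (z : H) ^ n = 1 := by
      have h4 := hνpow z hcen
      rw [hz] at h4
      exact h4.symm
    have h5 : (⟨(z : H), hxB⟩ : ↥B) ^ n = 1 := Subtype.ext (by push_cast; exact hpow)
    have h6 : (⟨(z : H), hxB⟩ : ↥B) = 1 := by
      refine (powCoprime hcop).injective ?_
      show (⟨(z : H), hxB⟩ : ↥B) ^ n = (1 : ↥B) ^ n
      rw [one_pow, h5]
    have h7 : (z : H) = 1 := congrArg Subtype.val h6
    simpa [Subgroup.mem_bot] using h7
end

section
/- Let G be a finite solvable group, p a prime, and S a Sylow p-subgroup of G. Then W_G(S) is a direct factor of Z(S): there exists a subgroup K ≤ Z(S) with Z(S) = W_G(S) × K. -/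
open Subgroup Pointwise

universe u

section AuxLemmas

variable {G : Type*} [Group G]

lemma aux_pow_shift {u v z : G} (h : v * u = u * v * z) (hzv : z * v = v * z) :
    ∀ n : ℕ, v ^ n * u = u * v ^ n * z ^ n := by
  intro n
  induction n with
  | zero => simp
  | succ n ih =>
    calc v ^ (n+1) * u = v * (v ^ n * u) := by rw [pow_succ']; group
      _ = v * (u * v ^ n * z ^ n) := by rw [ih]
      _ = (v * u) * v ^ n * z ^ n := by group
      _ = u * v * z * v ^ n * z ^ n := by rw [h]
      _ = u * v * (z * v ^ n) * z ^ n := by group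
      _ = u * v * (v ^ n * z) * z ^ n := by rw [(Commute.pow_right hzv n).eq]
      _ = u * v ^ (n+1) * z ^ (n+1) := by rw [pow_succ, pow_succ']; group

lemma aux_pow_expand {u v z : G} (h : v * u = u * v * z) (hzu : z * u = u * z)
    (hzv : z * v = v * z) : ∀ n : ℕ, (u * v) ^ n = u ^ n * v ^ n * z ^ (n.choose 2) := by
  intro n
  induction n with
  | zero => simp
  | succ n ih =>
    have h1 : z ^ (n.choose 2) * u = u * z ^ (n.choose 2) := (Commute.pow_left hzu (n.choose 2)).eq
    have h2 : z ^ (n.choose 2) * v = v * z ^ (n.choose 2) := (Commute.pow_left hzv (n.choose 2)).eq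
    have h3 : z ^ n * v = v * z ^ n := (Commute.pow_left hzv n).eq
    have hc : (n+1).choose 2 = n + n.choose 2 := by
      rw [Nat.choose_succ_succ, Nat.choose_one_right]
    calc (u * v) ^ (n+1) = (u * v) ^ n * (u * v) := by rw [pow_succ]
      _ = u ^ n * v ^ n * z ^ (n.choose 2) * u * v := by rw [ih]; group
      _ = u ^ n * v ^ n * (z ^ (n.choose 2) * u) * v := by group
      _ = u ^ n * v ^ n * (u * z ^ (n.choose 2)) * v := by rw [h1]
      _ = u ^ n * (v ^ n * u) * (z ^ (n.choose 2) * v) := by group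
      _ = u ^ n * (v ^ n * u) * (v * z ^ (n.choose 2)) := by rw [h2]
      _ = u ^ n * (u * v ^ n * z ^ n) * (v * z ^ (n.choose 2)) := by rw [aux_pow_shift h hzv n]
      _ = u ^ (n+1) * v ^ n * (z ^ n * v) * z ^ (n.choose 2) := by rw [pow_succ]; group
      _ = u ^ (n+1) * v ^ n * (v * z ^ n) * z ^ (n.choose 2) := by rw [h3]
      _ = u ^ (n+1) * v ^ (n+1) * z ^ (n + n.choose 2) := by rw [pow_succ, pow_add]; group
      _ = u ^ (n+1) * v ^ (n+1) * z ^ ((n+1).choose 2) := by rw [hc]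

end AuxLemmas



lemma aux_exists_K {p q : ℕ} (m a b : ℕ) (hp : p.Prime) (hq : q.Prime) (hne : q ≠ p) :
    ∃ K, a ≤ K ∧ b ≤ K ∧ p ^ m ∣ (q ^ K).choose 2 := by
  by_cases hq2 : q = 2
  · subst hq2
    have hcop : Nat.Coprime 2 (p ^ m) :=
      Nat.Coprime.pow_right m ((Nat.coprime_primes hq hp).mpr hne)
    have ht : 0 < (p ^ m).totient := Nat.totient_pos.mpr (by have := hp.pos; positivity)
    refine ⟨(p ^ m).totient * (a + b + 1), ?_, ?_, ?_⟩
    · calc a ≤ a + b + 1 := by omega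
        _ ≤ (p ^ m).totient * (a + b + 1) := Nat.le_mul_of_pos_left _ ht
    · calc b ≤ a + b + 1 := by omega
        _ ≤ (p ^ m).totient * (a + b + 1) := Nat.le_mul_of_pos_left _ ht
    · set K := (p ^ m).totient * (a + b + 1) with hK
      have hK1 : 1 ≤ K := by
        have : 1 ≤ a + b + 1 := by omega
        calc 1 ≤ (p^m).totient * 1 := by omega
          _ ≤ K := by rw [hK]; exact Nat.mul_le_mul_left _ this
      have hmod : 2 ^ K ≡ 1 [MOD p ^ m] := by
        have := (Nat.ModEq.pow_totient hcop).pow (a + b + 1)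
        rwa [← pow_mul, one_pow] at this
      have hdvd : p ^ m ∣ 2 ^ K - 1 :=
        (Nat.modEq_iff_dvd' (Nat.one_le_two_pow)).mp hmod.symm
      have h2K : 2 ^ K = 2 * 2 ^ (K - 1) := by
        conv_lhs => rw [show K = 1 + (K - 1) by omega]
        rw [pow_add, pow_one]
      rw [Nat.choose_two_right, h2K, mul_assoc, Nat.mul_div_cancel_left _ (by norm_num : 0 < 2)]
      rw [← h2K]
      exact Dvd.dvd.mul_left hdvd _
  · have hq2' : Nat.Coprime q 2 := (Nat.coprime_primes hq Nat.prime_two).mpr hq2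
    have hcop : Nat.Coprime q (2 * p ^ m) :=
      Nat.Coprime.mul_right hq2' (Nat.Coprime.pow_right m ((Nat.coprime_primes hq hp).mpr hne))
    have ht : 0 < (2 * p ^ m).totient := Nat.totient_pos.mpr (by have := hp.pos; positivity)
    refine ⟨(2 * p ^ m).totient * (a + b + 1), ?_, ?_, ?_⟩
    · calc a ≤ a + b + 1 := by omega
        _ ≤ (2 * p ^ m).totient * (a + b + 1) := Nat.le_mul_of_pos_left _ ht
    · calc b ≤ a + b + 1 := by omega
        _ ≤ (2 * p ^ m).totient * (a + b + 1) := Nat.le_mul_of_pos_left _ ht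
    · set K := (2 * p ^ m).totient * (a + b + 1) with hK
      have hmod : q ^ K ≡ 1 [MOD 2 * p ^ m] := by
        have := (Nat.ModEq.pow_totient hcop).pow (a + b + 1)
        rwa [← pow_mul, one_pow] at this
      have hq1 : 1 ≤ q ^ K := Nat.one_le_pow _ _ hq.pos
      have hdvd : 2 * p ^ m ∣ q ^ K - 1 := (Nat.modEq_iff_dvd' hq1).mp hmod.symm
      obtain ⟨s, hs⟩ := hdvd
      rw [Nat.choose_two_right, hs, mul_assoc, Nat.mul_div_assoc _ ⟨p ^ m * s, by ring⟩]
      rw [show 2 * (p ^ m * s) / 2 = p ^ m * s from Nat.mul_div_cancel_left _ (by norm_num)]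
      exact Dvd.dvd.mul_left ⟨s, rfl⟩ _


section SubgroupLemmas

variable {G : Type*} [Group G] {p : ℕ} [Fact p.Prime]

variable {G : Type*} [Group G] {p : ℕ} [Fact p.Prime]

lemma normal_pgroup_le_sylow [Finite G] {Q : Subgroup G} (hQn : Q.Normal)
    (hQ : IsPGroup p Q) (S : Sylow p G) : Q ≤ S := by
  obtain ⟨T, hT⟩ := hQ.exists_le_sylow
  obtain ⟨g, hg⟩ := MulAction.exists_smul_eq G T S
  intro x hx
  have h1 : g⁻¹ * x * g ∈ T := hT (by simpa using hQn.conj_mem x hx g⁻¹)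
  have h2 : x ∈ (↑(g • T) : Subgroup G) := by
    rw [Sylow.coe_subgroup_smul, Subgroup.pointwise_smul_def]
    exact ⟨g⁻¹ * x * g, h1, by simp [MulAut.smul_def]; group⟩
  rwa [hg] at h2

lemma eq_of_le_of_card_dvd [Finite G] {H K : Subgroup G} (h : H ≤ K)
    (hd : Nat.card K ∣ Nat.card H) : H = K := by
  have e : Nat.card (H.subgroupOf K) = Nat.card H :=
    Nat.card_congr (Subgroup.subgroupOfEquivOfLe h).toEquiv
  have hcard : Nat.card (H.subgroupOf K) = Nat.card K := by
    rw [e]; exact Nat.dvd_antisymm (Subgroup.card_dvd_of_le h) hd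
  have := Subgroup.eq_top_of_card_eq _ hcard
  exact le_antisymm h (Subgroup.subgroupOf_eq_top.mp this)

lemma centralizer_normal' {H : Subgroup G} (hH : H.Normal) :
    (Subgroup.centralizer (H : Set G)).Normal := by
  constructor
  intro n hn g
  rw [Subgroup.mem_centralizer_iff] at hn ⊢
  intro h hh
  have h1 : g⁻¹ * h * g ∈ H := by simpa using hH.conj_mem h hh g⁻¹
  have h2 := hn _ h1
  calc h * (g * n * g⁻¹) = g * ((g⁻¹ * h * g) * n) * g⁻¹ := by group
    _ = g * (n * (g⁻¹ * h * g)) * g⁻¹ := by rw [h2]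
    _ = g * n * g⁻¹ * h := by group

end SubgroupLemmas

section Part1

variable {G : Type*} [Group G] {p : ℕ} [Fact p.Prime]

variable {G : Type*} [Group G] {p : ℕ} [Fact p.Prime]

/-- Core lemma: in a finite solvable group with no nontrivial normal `p'`-subgroup, the
center of a Sylow subgroup is contained in a normal `p`-subgroup (contained in `S`). -/
lemma part1 [Finite G] [Group.IsSolvable G]
    (hOp' : ∀ H : Subgroup G, H.Normal → Nat.Coprime (Nat.card H) p → H = ⊥)
    (S : Sylow p G) :
    ∃ F : Subgroup G, F.Normal ∧ F ≤ S ∧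
      (S : Subgroup G) ⊓ Subgroup.centralizer (S : Set G) ≤ F := by
  classical
  set ι := {H : Subgroup G // H.Normal ∧ IsPGroup p H} with hι
  set F : Subgroup G := ⨆ i : ι, (i : Subgroup G) with hF
  have hFle : F ≤ S := iSup_le fun i => normal_pgroup_le_sylow i.2.1 i.2.2 S
  have hmax : ∀ Q : Subgroup G, Q.Normal → IsPGroup p Q → Q ≤ F := fun Q h1 h2 =>
    le_iSup (fun i : ι => (i : Subgroup G)) ⟨Q, h1, h2⟩
  have hFn : F.Normal := by
    constructor
    intro x hx g
    refine Subgroup.iSup_induction (C := fun y => g * y * g⁻¹ ∈ F) _ hx ?_ (by simpa using one_mem F) ?_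
    · intro i y hyi
      exact hmax i i.2.1 i.2.2 (i.2.1.conj_mem y hyi g)
    · intro a b ha hb
      have : g * (a * b) * g⁻¹ = (g * a * g⁻¹) * (g * b * g⁻¹) := by group
      rw [this]; exact mul_mem ha hb
  set C := Subgroup.centralizer (F : Set G) with hC
  have hCn : C.Normal := centralizer_normal' hFn
  refine ⟨F, hFn, hFle, ?_⟩
  have hCF : C ≤ F := by
    by_contra hCF
    set Z := C ⊓ F with hZ
    have hZp : IsPGroup p Z := S.2.to_le (inf_le_right.trans hFle)
    -- the derived chain of C
    set D : ℕ → Subgroup G := fun k => (fun H : Subgroup G => ⁅H, H⁆)^[k] C with hD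
    have hD0 : D 0 = C := rfl
    have hDsucc : ∀ k, D (k + 1) = ⁅D k, D k⁆ := fun k =>
      Function.iterate_succ_apply' (fun H : Subgroup G => ⁅H, H⁆) k C
    have hDn : ∀ k, (D k).Normal := by
      intro k
      induction k with
      | zero => exact hCn
      | succ k ih => rw [hDsucc]; exact @Subgroup.commutator_normal _ _ (D k) (D k) ih ih
    have hDC : ∀ k, D k ≤ C := by
      intro k
      induction k with
      | zero => exact le_rfl
      | succ k ih =>
        rw [hDsucc]
        refine le_trans ?_ ih
        exact Subgroup.commutator_le.mpr fun a ha b hb =>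
          mul_mem (mul_mem (mul_mem ha hb) (inv_mem ha)) (inv_mem hb)
    have hDds : ∀ k, D k ≤ derivedSeries G k := by
      intro k
      induction k with
      | zero => exact le_top
      | succ k ih => rw [hDsucc, derivedSeries_succ]; exact Subgroup.commutator_mono ih ih
    obtain ⟨nn, hnn⟩ : ∃ n, derivedSeries G n = ⊥ := (isSolvable_def G).mp inferInstance
    have hexists : ∃ k, D k ≤ Z := ⟨nn, by rw [hZ]; exact le_trans ((hDds nn).trans hnn.le) bot_le⟩
    set k0 := Nat.find hexists with hk0
    have hk0spec : D k0 ≤ Z := Nat.find_spec hexists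
    have hk0ne : k0 ≠ 0 := by
      intro h
      rw [h, hD0] at hk0spec
      exact hCF (hk0spec.trans inf_le_right)
    obtain ⟨i, hi⟩ : ∃ i, k0 = i + 1 := ⟨k0 - 1, by omega⟩
    have hEnle : ¬ D i ≤ Z := Nat.find_min hexists (by omega)
    have hcommZ : ⁅D i, D i⁆ ≤ Z := by rw [← hDsucc, ← hi]; exact hk0spec
    set E := D i with hE
    have hEn : E.Normal := hDn i
    have hEC : E ≤ C := hDC i
    -- every element of Z commutes with every element of E
    have hZcen : ∀ z ∈ Z, ∀ d ∈ E, z * d = d * z := by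
      intro z hz d hd
      exact (Subgroup.mem_centralizer_iff.mp (hEC hd)) z hz.2
    -- q-torsion subgroups of E are trivial
    have hQq : ∀ q : ℕ, q.Prime → q ≠ p → ∀ x ∈ E, (∃ k, x ^ q ^ k = 1) → x = 1 := by
      intro q hq hqp
      have hp' : p.Prime := Fact.out
      set Qq : Subgroup G :=
        { carrier := {x | x ∈ E ∧ ∃ k, x ^ q ^ k = 1}
          one_mem' := ⟨one_mem E, 0, one_pow _⟩
          inv_mem' := by
            rintro x ⟨hxE, k, hk⟩
            exact ⟨inv_mem hxE, k, by rw [inv_pow, hk, inv_one]⟩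
          mul_mem' := by
            rintro x y ⟨hxE, a, ha⟩ ⟨hyE, b, hb⟩
            refine ⟨mul_mem hxE hyE, ?_⟩
            set z := y⁻¹ * x⁻¹ * y * x with hz
            have hform : (open commutatorElement in ⁅y⁻¹, x⁻¹⁆) = z := by
              rw [commutatorElement_def, inv_inv, inv_inv, hz]
            have hzmem : z ∈ Z := hcommZ (hform ▸
              Subgroup.commutator_mem_commutator (inv_mem hyE) (inv_mem hxE))
            have hzx : z * x = x * z := hZcen z hzmem x hxE
            have hzy : z * y = y * z := hZcen z hzmem y hyE
            have hvu : y * x = x * y * z := by rw [hz]; group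
            obtain ⟨m, hm⟩ := hZp ⟨z, hzmem⟩
            have hzp : z ^ p ^ m = 1 := by
              have := congrArg Subtype.val hm
              simpa using this
            obtain ⟨K, haK, hbK, hdvd⟩ := aux_exists_K m a b hp' hq hqp
            refine ⟨K, ?_⟩
            rw [aux_pow_expand hvu hzx hzy (q ^ K)]
            have hx1 : x ^ q ^ K = 1 := by
              rw [show q ^ K = q ^ a * q ^ (K - a) by rw [← pow_add]; congr 1; omega,
                pow_mul, ha, one_pow]
            have hy1 : y ^ q ^ K = 1 := by
              rw [show q ^ K = q ^ b * q ^ (K - b) by rw [← pow_add]; congr 1; omega,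
                pow_mul, hb, one_pow]
            obtain ⟨t, ht⟩ := hdvd
            have hz1 : z ^ (q ^ K).choose 2 = 1 := by
              rw [ht, pow_mul, hzp, one_pow]
            rw [hx1, hy1, hz1, one_mul, one_mul] } with hQqdef
      have hQn : Qq.Normal := by
        constructor
        rintro x ⟨hxE, k, hk⟩ g
        refine ⟨hEn.conj_mem x hxE g, k, ?_⟩
        rw [conj_pow, hk, mul_one, mul_inv_cancel]
      have hQp : IsPGroup q Qq := by
        rintro ⟨x, hxE, k, hk⟩
        exact ⟨k, Subtype.ext (by simpa using hk)⟩
      haveI := Fact.mk hq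
      have hQcop : Nat.Coprime (Nat.card Qq) p := by
        obtain ⟨nq, hnq⟩ := IsPGroup.iff_card.mp hQp
        rw [hnq]
        exact Nat.Coprime.pow_left _ ((Nat.coprime_primes hq hp').mpr hqp)
      have hbot := hOp' Qq hQn hQcop
      intro x hxE hx
      have : x ∈ Qq := ⟨hxE, hx⟩
      rwa [hbot, Subgroup.mem_bot] at this
    -- E is a p-group
    have hEp : IsPGroup p E := by
      rintro ⟨x, hxE⟩
      suffices h : ∃ k, x ^ p ^ k = 1 by
        obtain ⟨k, h⟩ := h
        exact ⟨k, Subtype.ext (by simpa using h)⟩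
      have hn0 : orderOf x ≠ 0 := (orderOf_pos x).ne'
      have hfac : ∀ {d : ℕ}, d.Prime → d ∣ orderOf x → d = p := by
        intro q hq hdvd
        by_contra hqp
        have hgcd : Nat.gcd (orderOf x) (orderOf x / q) = orderOf x / q := by
          rw [Nat.gcd_comm]
          exact Nat.gcd_eq_left (Nat.div_dvd_of_dvd hdvd)
        have h1 : orderOf (x ^ (orderOf x / q)) = q := by
          rw [orderOf_pow, hgcd, Nat.div_div_self hdvd hn0]
        have h2 : x ^ (orderOf x / q) = 1 := by
          refine hQq q hq hqp _ (pow_mem hxE _) ⟨1, ?_⟩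
          have h3 := pow_orderOf_eq_one (x ^ (orderOf x / q))
          rw [h1] at h3
          rwa [pow_one]
        rw [h2, orderOf_one] at h1
        exact hq.one_lt.ne h1
      have := Nat.eq_prime_pow_of_unique_prime_dvd hn0 hfac
      exact ⟨_, by rw [← this]; exact pow_orderOf_eq_one x⟩
    have : E ≤ Z := le_inf hEC (hmax E hEn hEp)
    exact hEnle this
  intro x hx
  obtain ⟨hxS, hxc⟩ := hx
  refine hCF ?_
  rw [hC, Subgroup.mem_centralizer_iff]
  intro f hf
  exact (Subgroup.mem_centralizer_iff.mp hxc) f (hFle hf)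

end Part1

section Part2

variable {p : ℕ} [Fact p.Prime]

variable {p : ℕ} [Fact p.Prime]

structure GoodPair {G : Type*} [Group G] (p : ℕ) [Fact p.Prime] (S : Sylow p G)
    (M N : Subgroup G) : Prop where
  hMn : M.Normal
  hNn : N.Normal
  hcop : (Nat.card M).Coprime p
  hMN : M ≤ N
  hdec : ∀ n ∈ N, ∃ s ∈ (S : Subgroup G) ⊓ N, ∃ m ∈ M, n = s * m
  hZ : (S : Subgroup G) ⊓ Subgroup.centralizer (S : Set G) ≤ N

lemma goodPair_exists : ∀ (n : ℕ) (G : Type u) [Group G] [Finite G] [Group.IsSolvable G],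
    Nat.card G ≤ n → ∀ S : Sylow p G, ∃ M N : Subgroup G, GoodPair p S M N := by
  intro n
  induction n with
  | zero =>
    intro G _ _ _ hle S
    have : 0 < Nat.card G := Nat.card_pos
    omega
  | succ n ih =>
    intro G _ _ _ hle S
    by_cases hex : ∃ A : Subgroup G, A.Normal ∧ (Nat.card A).Coprime p ∧ A ≠ ⊥
    · obtain ⟨A, hAn, hAcop, hAne⟩ := hex
      haveI := hAn
      set mk := QuotientGroup.mk' A with hmk
      have hmks : Function.Surjective mk := QuotientGroup.mk'_surjective A
      have hcard : Nat.card (G ⧸ A) < Nat.card G := by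
        have h1 := Subgroup.card_eq_card_quotient_mul_card_subgroup A
        have h2 : 1 < Nat.card A := (Subgroup.one_lt_card_iff_ne_bot A).mpr hAne
        have h3 : 0 < Nat.card (G ⧸ A) := Nat.card_pos
        nlinarith
      set Sb := S.mapSurjective hmks with hSb
      have hSbcoe : (Sb : Subgroup (G ⧸ A)) = (S : Subgroup G).map mk := rfl
      obtain ⟨Mb, Nb, hg⟩ := ih (G ⧸ A) (by omega) Sb
      have hAle : A ≤ Mb.comap mk := fun a ha => by
        simp only [Subgroup.mem_comap]
        have : mk a = 1 := (QuotientGroup.eq_one_iff a).mpr ha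
        rw [this]; exact one_mem _
      refine ⟨Mb.comap mk, Nb.comap mk, ?_, ?_, ?_, Subgroup.comap_mono hg.hMN, ?_, ?_⟩
      · exact hg.hMn.comap mk
      · exact hg.hNn.comap mk
      · -- card (comap mk Mb) = card Mb * card A
        set Mpre := Mb.comap mk with hMpre
        set ψ : ↥Mpre →* G ⧸ A := mk.comp Mpre.subtype with hψ
        have hker : ψ.ker = A.subgroupOf Mpre := by
          ext x
          simp only [MonoidHom.mem_ker, hψ, MonoidHom.comp_apply, Subgroup.mem_subgroupOf]
          exact QuotientGroup.eq_one_iff _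
        have hrange : ψ.range = Mb := by
          have h1 : ψ.range = Mpre.map mk := by
            ext y
            constructor
            · rintro ⟨x, rfl⟩; exact ⟨x, x.2, rfl⟩
            · rintro ⟨g, hgm, rfl⟩; exact ⟨⟨g, hgm⟩, rfl⟩
          rw [h1, hMpre, Subgroup.map_comap_eq_self_of_surjective hmks]
        have hc1 : Nat.card Mpre = Nat.card (↥Mpre ⧸ ψ.ker) * Nat.card ψ.ker :=
          Subgroup.card_eq_card_quotient_mul_card_subgroup ψ.ker
        have hc2 : Nat.card (↥Mpre ⧸ ψ.ker) = Nat.card Mb := by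
          rw [← hrange]
          exact Nat.card_congr (QuotientGroup.quotientKerEquivRange ψ).toEquiv
        have hc3 : Nat.card ψ.ker = Nat.card A := by
          rw [hker]
          exact Nat.card_congr (Subgroup.subgroupOfEquivOfLe hAle).toEquiv
        rw [hc1, hc2, hc3]
        exact Nat.Coprime.mul hg.hcop hAcop
      · intro x hx
        have hmkx : mk x ∈ Nb := hx
        obtain ⟨sb, hsb, mb, hmb, heq⟩ := hg.hdec (mk x) hmkx
        obtain ⟨hsbS, hsbN⟩ := hsb
        rw [hSbcoe] at hsbS
        obtain ⟨s, hsS, rfl⟩ := hsbS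
        refine ⟨s, ⟨hsS, ?_⟩, s⁻¹ * x, ?_, by group⟩
        · exact hsbN
        · simp only [Subgroup.mem_comap, map_mul, map_inv]
          rw [heq, inv_mul_cancel_left]
          exact hmb
      · intro x hx
        obtain ⟨hxS, hxc⟩ := hx
        have h1 : mk x ∈ (Sb : Subgroup (G ⧸ A)) := by
          rw [hSbcoe]; exact ⟨x, hxS, rfl⟩
        have h2 : mk x ∈ Subgroup.centralizer ((Sb : Subgroup (G ⧸ A)) : Set (G ⧸ A)) := by
          refine Subgroup.mem_centralizer_iff.mpr ?_
          rintro y hy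
          rw [hSbcoe] at hy
          obtain ⟨s, hsS, rfl⟩ := hy
          rw [← map_mul, ← map_mul, (Subgroup.mem_centralizer_iff.mp hxc) s hsS]
        exact hg.hZ (Subgroup.mem_inf.mpr ⟨h1, h2⟩)
    · push_neg at hex
      obtain ⟨F, hFn, hFle, hFZ⟩ := part1 (fun H h1 h2 => hex H h1 h2) S
      refine ⟨⊥, F, ?_, hFn, by simp, bot_le, ?_, hFZ⟩
      · infer_instance
      · intro x hx
        exact ⟨x, ⟨hFle hx, hx⟩, 1, one_mem _, (mul_one x).symm⟩

end Part2

section Part3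

variable {p : ℕ} [Fact p.Prime]

theorem part3 {G : Type*} [Group G] [Finite G] (S : Sylow p G) {M N : Subgroup G}
    (hg : GoodPair p S M N) :
    ∃ W K : Subgroup G,
      (W : Set G) = {x : G | IsWeaklyClosed (S : Subgroup G) x} ∧
      K ≤ (S : Subgroup G) ⊓ Subgroup.centralizer (S : Set G) ∧
      W ⊔ K = (S : Subgroup G) ⊓ Subgroup.centralizer (S : Set G) ∧
      W ⊓ K = ⊥ := by
  classical
  haveI hNn := hg.hNn
  have hp' : p.Prime := Fact.out
  set P : Subgroup G := (S : Subgroup G) ⊓ N with hP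
  set L : Subgroup G := Subgroup.normalizer (P : Set G) with hL
  set A : Subgroup G := Subgroup.centralizer (P : Set G) ⊓ P with hA
  set Zs : Subgroup G := (S : Subgroup G) ⊓ Subgroup.centralizer (S : Set G) with hZs
  set W : Subgroup G := Subgroup.centralizer (L : Set G) ⊓ P with hW
  -- basic inclusions
  have hPS : P ≤ (S : Subgroup G) := inf_le_left
  have hPN : P ≤ N := inf_le_right
  have hPL : P ≤ L := le_normalizer
  have hSL : (S : Subgroup G) ≤ L := by
    intro s hs
    rw [hL, Subgroup.mem_normalizer_iff]
    intro x
    simp only [hP, Subgroup.mem_inf]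
    constructor
    · rintro ⟨hx1, hx2⟩
      exact ⟨mul_mem (mul_mem hs hx1) (inv_mem hs), hNn.conj_mem x hx2 s⟩
    · rintro ⟨hx1, hx2⟩
      have h1 : x = s⁻¹ * (s * x * s⁻¹) * s := by group
      constructor
      · rw [h1]; exact mul_mem (mul_mem (inv_mem hs) hx1) hs
      · rw [h1]
        have := hNn.conj_mem _ hx2 s⁻¹
        simpa [mul_assoc] using this
  have hZsN : Zs ≤ N := hg.hZ
  have hZsP : Zs ≤ P := le_inf inf_le_left hZsN
  have hZsA : Zs ≤ A := by
    intro a ha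
    refine Subgroup.mem_inf.mpr ⟨?_, hZsP ha⟩
    exact Subgroup.centralizer_le (by exact_mod_cast SetLike.coe_subset_coe.mpr hPS) ha.2
  have hWZs : W ≤ Zs := by
    intro w hw
    exact Subgroup.mem_inf.mpr ⟨hPS hw.2, Subgroup.centralizer_le
      (by exact_mod_cast SetLike.coe_subset_coe.mpr hSL) hw.1⟩
  have hWA : W ≤ A := by
    intro w hw
    exact Subgroup.mem_inf.mpr ⟨Subgroup.centralizer_le
      (by exact_mod_cast SetLike.coe_subset_coe.mpr hPL) hw.1, hw.2⟩
  -- A is "commutative"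
  have hACM : ∀ a ∈ A, ∀ b ∈ A, a * b = b * a :=
    fun a ha b hb => (Subgroup.mem_centralizer_iff.mp hb.1) a ha.2
  -- P is a p-group, so M ⊓ P = ⊥
  have hPp : IsPGroup p P := S.2.to_le hPS
  have hMP : M ⊓ P = ⊥ := by
    obtain ⟨k, hk⟩ := IsPGroup.iff_card.mp hPp
    refine inf_eq_bot_of_coprime ?_
    rw [hk]
    exact Nat.Coprime.pow_right k hg.hcop
  -- conjugation by L preserves A
  have hconjA : ∀ g ∈ L, ∀ a ∈ A, g * a * g⁻¹ ∈ A := by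
    intro g hgL a haA
    have hnorm := Subgroup.mem_normalizer_iff.mp hgL
    refine Subgroup.mem_inf.mpr ⟨?_, (hnorm a).mp haA.2⟩
    refine Subgroup.mem_centralizer_iff.mpr ?_
    intro t ht
    have ht' : g⁻¹ * t * g ∈ P := by
      have := (Subgroup.mem_normalizer_iff.mp (inv_mem hgL)) t
      simpa using this.mp ht
    have hc := (Subgroup.mem_centralizer_iff.mp haA.1) _ ht'
    calc t * (g * a * g⁻¹) = g * ((g⁻¹ * t * g) * a) * g⁻¹ := by group
      _ = g * (a * (g⁻¹ * t * g)) * g⁻¹ := by rw [hc]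
      _ = (g * a * g⁻¹) * t := by group
  -- Frattini: L ⊔ N = ⊤
  have hcardN : Nat.card N = Nat.card P * Nat.card M := by
    have hbij : Function.Bijective (fun x : ↥P × ↥M =>
        (⟨(x.1 : G) * (x.2 : G), mul_mem (hPN x.1.2) (hg.hMN x.2.2)⟩ : ↥N)) := by
      constructor
      · rintro ⟨s1, m1⟩ ⟨s2, m2⟩ hEq
        have h1 : (s1 : G) * m1 = (s2 : G) * m2 := congrArg Subtype.val hEq
        have h2 : (s2 : G)⁻¹ * (s1 : G) = (m2 : G) * (m1 : G)⁻¹ :=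
          calc (s2 : G)⁻¹ * s1 = (s2 : G)⁻¹ * ((s1 : G) * m1) * (m1 : G)⁻¹ := by group
            _ = (s2 : G)⁻¹ * ((s2 : G) * m2) * (m1 : G)⁻¹ := by rw [h1]
            _ = (m2 : G) * (m1 : G)⁻¹ := by group
        have h3 : (s2 : G)⁻¹ * (s1 : G) ∈ M ⊓ P := by
          refine Subgroup.mem_inf.mpr ⟨?_, mul_mem (inv_mem s2.2) s1.2⟩
          rw [h2]; exact mul_mem m2.2 (inv_mem m1.2)
        rw [hMP, Subgroup.mem_bot] at h3
        have hs12 : (s1 : ↥P) = s2 := by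
          ext; exact (inv_mul_eq_one.mp h3).symm
        have hm12 : (m1 : ↥M) = m2 := by
          ext
          have : (s1 : G) = s2 := congrArg Subtype.val hs12
          rw [this] at h1
          exact mul_left_cancel h1
        rw [Prod.ext_iff]; exact ⟨hs12, hm12⟩
      · rintro ⟨n, hn⟩
        obtain ⟨s, hs, m, hm, heq⟩ := hg.hdec n hn
        exact ⟨(⟨s, hs⟩, ⟨m, hm⟩), Subtype.ext heq.symm⟩
    calc Nat.card ↥N = Nat.card (↥P × ↥M) := (Nat.card_eq_of_bijective _ hbij).symm
      _ = Nat.card P * Nat.card M := Nat.card_prod _ _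
  have hP'p : IsPGroup p (P.subgroupOf N) :=
    hPp.of_equiv (Subgroup.subgroupOfEquivOfLe hPN).symm
  have hcardP' : Nat.card (P.subgroupOf N) = Nat.card P :=
    Nat.card_congr (Subgroup.subgroupOfEquivOfLe hPN).toEquiv
  have hPpos : 0 < Nat.card P := Nat.card_pos
  have hindex : (P.subgroupOf N).index = Nat.card M := by
    have h1 := Subgroup.card_mul_index (P.subgroupOf N)
    rw [hcardP', hcardN, mul_comm (Nat.card P) (Nat.card M)] at h1
    exact Nat.eq_of_mul_eq_mul_left hPpos (by linarith [h1])
  have hndvd : ¬ p ∣ (P.subgroupOf N).index := by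
    rw [hindex]
    intro hdvd
    have h1 : p ∣ Nat.gcd (Nat.card M) p := Nat.dvd_gcd hdvd dvd_rfl
    rw [Nat.Coprime.gcd_eq_one hg.hcop] at h1
    exact hp'.one_lt.ne' (Nat.eq_one_of_dvd_one h1)
  have hfrat : L ⊔ N = ⊤ := by
    have h := Sylow.normalizer_sup_eq_top (p := p) (N := N) (hP'p.toSylow hndvd)
    have hcoe : (((hP'p.toSylow hndvd : Subgroup ↥N)).map N.subtype) = P := by
      rw [IsPGroup.toSylow_coe, Subgroup.subgroupOf_map_subtype, inf_of_le_left hPN]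
    rw [hcoe] at h
    exact h
  have hdecomp : ∀ g : G, ∃ h ∈ L, ∃ s ∈ P, ∃ m ∈ M, g = h * s * m := by
    intro g
    have hg' : g ∈ (↑(L ⊔ N) : Set G) := by rw [hfrat]; trivial
    rw [Subgroup.mul_normal] at hg'
    obtain ⟨h, hh, n, hn, heq⟩ := hg'
    obtain ⟨s, hs, m, hm, heq2⟩ := hg.hdec n hn
    exact ⟨h, hh, s, hs, m, hm, by rw [← heq, heq2, mul_assoc]⟩
  -- The carrier of W is exactly the set of weakly closed elements
  have hWcar : (W : Set G) = {x : G | IsWeaklyClosed (S : Subgroup G) x} := by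
    ext x
    simp only [SetLike.mem_coe, Set.mem_setOf_eq]
    constructor
    · intro hx
      obtain ⟨hx1, hxP⟩ := Subgroup.mem_inf.mp hx
      have hxC : ∀ t ∈ L, t * x = x * t := Subgroup.mem_centralizer_iff.mp hx1
      refine ⟨hPS hxP, ?_⟩
      intro g hgS
      obtain ⟨h, hh, s, hs, m, hm, rfl⟩ := hdecomp g
      have hxh : h⁻¹ * x * h = x := by
        rw [mul_assoc, ← hxC h hh, inv_mul_cancel_left]
      have hxs : s⁻¹ * x * s = x := by
        rw [mul_assoc, ← hxC s (hPL hs), inv_mul_cancel_left]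
      have hred : (h*s*m)⁻¹ * x * (h*s*m) = m⁻¹ * x * m := by
        calc (h*s*m)⁻¹ * x * (h*s*m) = m⁻¹ * (s⁻¹ * (h⁻¹ * x * h) * s) * m := by group
          _ = m⁻¹ * (s⁻¹ * x * s) * m := by rw [hxh]
          _ = m⁻¹ * x * m := by rw [hxs]
      rw [hred] at hgS ⊢
      have hmem : m⁻¹ * x * m ∈ P := by
        refine Subgroup.mem_inf.mpr ⟨hgS, ?_⟩
        have := hNn.conj_mem x (hPN hxP) m⁻¹
        simpa using this
      have hc : x⁻¹ * (m⁻¹ * x * m) ∈ M ⊓ P := by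
        refine Subgroup.mem_inf.mpr ⟨?_, mul_mem (inv_mem hxP) hmem⟩
        have h1 : x⁻¹ * m⁻¹ * x ∈ M := by
          have := hg.hMn.conj_mem m⁻¹ (inv_mem hm) x⁻¹
          simpa using this
        have h2 : x⁻¹ * (m⁻¹ * x * m) = (x⁻¹ * m⁻¹ * x) * m := by group
        rw [h2]; exact mul_mem h1 hm
      rw [hMP, Subgroup.mem_bot] at hc
      have := inv_mul_eq_one.mp hc
      exact this.symm
    · rintro ⟨hxS, hcond⟩
      have hxcS : x ∈ Subgroup.centralizer ((S : Subgroup G) : Set G) := by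
        refine Subgroup.mem_centralizer_iff.mpr ?_
        intro s hsS
        have h1 : s⁻¹ * x * s ∈ (S : Subgroup G) := mul_mem (mul_mem (inv_mem hsS) hxS) hsS
        have h2 := hcond s h1
        conv_lhs => rw [← h2]
        group
      have hxZs : x ∈ Zs := Subgroup.mem_inf.mpr ⟨hxS, hxcS⟩
      refine Subgroup.mem_inf.mpr ⟨?_, hZsP hxZs⟩
      refine Subgroup.mem_centralizer_iff.mpr ?_
      intro h hhL
      have h1 : h⁻¹ * x * h ∈ P := by
        have := (Subgroup.mem_normalizer_iff.mp (inv_mem hhL)) x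
        simpa using this.mp (hZsP hxZs)
      have h2 := hcond h (hPS h1)
      conv_lhs => rw [← h2]
      group
  -- norm map construction
  set S' : Subgroup ↥L := (S : Subgroup G).subgroupOf L with hS'
  letI : Fintype (↥L ⧸ S') := Fintype.ofFinite _
  letI commA : CommGroup ↥A :=
    { (inferInstance : Group ↥A) with
      mul_comm := fun a b => Subtype.ext (hACM _ a.2 _ b.2) }
  have memA : ∀ (g : ↥L) (a : ↥Zs), (g : G) * (a : G) * (g : G)⁻¹ ∈ A :=
    fun g a => hconjA g g.2 a (hZsA a.2)
  have wd : ∀ (a : ↥Zs) (g1 g2 : ↥L), @Setoid.r _ (QuotientGroup.leftRel S') g1 g2 →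
      (⟨(g1:G) * a * (g1:G)⁻¹, memA g1 a⟩ : ↥A) = ⟨(g2:G) * a * (g2:G)⁻¹, memA g2 a⟩ := by
    intro a g1 g2 hrel
    have hs : ((g1⁻¹ * g2 : ↥L) : G) ∈ (S : Subgroup G) :=
      Subgroup.mem_subgroupOf.mp (QuotientGroup.leftRel_apply.mp hrel)
    have hsc : ((g1⁻¹ * g2 : ↥L) : G) = (g1:G)⁻¹ * (g2:G) := by push_cast; ring_nf
    rw [hsc] at hs
    have hcen : ((g1:G)⁻¹ * (g2:G)) * (a:G) = (a:G) * ((g1:G)⁻¹ * (g2:G)) :=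
      Subgroup.mem_centralizer_iff.mp (Subgroup.mem_inf.mp a.2).2 _ hs
    apply Subtype.ext
    show (g1:G) * a * (g1:G)⁻¹ = (g2:G) * a * (g2:G)⁻¹
    calc (g1:G) * a * (g1:G)⁻¹
        = (g1:G) * (((a:G) * ((g1:G)⁻¹ * (g2:G))) * ((g1:G)⁻¹ * (g2:G))⁻¹) * (g1:G)⁻¹ := by group
      _ = (g1:G) * ((((g1:G)⁻¹ * (g2:G)) * (a:G)) * ((g1:G)⁻¹ * (g2:G))⁻¹) * (g1:G)⁻¹ := by
          rw [← hcen]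
      _ = (g2:G) * a * (g2:G)⁻¹ := by group
  set Fn : ↥Zs → (↥L ⧸ S') → ↥A := fun a x =>
    Quotient.liftOn' x (fun g => (⟨(g:G) * a * (g:G)⁻¹, memA g a⟩ : ↥A)) (wd a) with hFn
  set nu : ↥Zs → ↥A := fun a => ∏ x : ↥L ⧸ S', Fn a x with hnu
  have hnumul : ∀ a b : ↥Zs, nu (a * b) = nu a * nu b := by
    intro a b
    have hx : ∀ x : ↥L ⧸ S', Fn (a * b) x = Fn a x * Fn b x := by
      intro x
      induction x using Quotient.inductionOn' with
      | h g =>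
        apply Subtype.ext
        show (g:G) * ((a:G) * (b:G)) * (g:G)⁻¹ = ((g:G) * a * (g:G)⁻¹) * ((g:G) * b * (g:G)⁻¹)
        group
    rw [hnu]
    simp only [hx]
    exact Finset.prod_mul_distrib
  set tau : ↥Zs →* ↥A := MonoidHom.mk' nu hnumul with htau
  -- value of nu on W
  have hnuW : ∀ a : ↥Zs, (a : G) ∈ W → nu a = (⟨a, hZsA a.2⟩ : ↥A) ^ Fintype.card (↥L ⧸ S') := by
    intro a ha
    have hx : ∀ x : ↥L ⧸ S', Fn a x = ⟨a, hZsA a.2⟩ := by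
      intro x
      induction x using Quotient.inductionOn' with
      | h g =>
        apply Subtype.ext
        show (g:G) * a * (g:G)⁻¹ = (a : G)
        have hcm : (g:G) * a = a * (g:G) :=
          Subgroup.mem_centralizer_iff.mp (Subgroup.mem_inf.mp ha).1 g g.2
        rw [hcm, mul_inv_cancel_right]
    rw [hnu]
    simp only [hx]
    rw [Finset.prod_const, Finset.card_univ]
  -- nu lands in the centralizer of L
  have hnucent : ∀ a : ↥Zs, (nu a : G) ∈ Subgroup.centralizer (L : Set G) := by
    intro a
    refine Subgroup.mem_centralizer_iff.mpr ?_
    intro h hhL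
    set hLl : ↥L := ⟨h, hhL⟩ with hhLl
    set ch : ↥A →* ↥A := MonoidHom.mk' (fun b => ⟨h * b * h⁻¹, hconjA h hhL b b.2⟩)
      (fun b c => Subtype.ext (by
        show h * ((b:G) * (c:G)) * h⁻¹ = (h * b * h⁻¹) * (h * c * h⁻¹)
        group)) with hch
    have hchF : ∀ x : ↥L ⧸ S', ch (Fn a x) = Fn a (hLl • x) := by
      intro x
      induction x using QuotientGroup.induction_on with
      | H g =>
        have hsm : hLl • (QuotientGroup.mk g : ↥L ⧸ S') = QuotientGroup.mk (hLl * g) :=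
          MulAction.Quotient.smul_mk S' hLl g
        rw [hsm]
        apply Subtype.ext
        show h * ((g:G) * a * (g:G)⁻¹) * h⁻¹ = ((hLl * g : ↥L):G) * a * ((hLl * g : ↥L):G)⁻¹
        push_cast
        simp only [hhLl]
        group
    have h1 : ch (nu a) = nu a := by
      rw [hnu, map_prod]
      simp only [hchF]
      exact Fintype.prod_bijective (fun x => hLl • x) (MulAction.bijective hLl) _ _ (fun x => rfl)
    have h2 : h * (nu a : G) * h⁻¹ = (nu a : G) := congrArg Subtype.val h1
    conv_rhs => rw [← h2]
    group
  -- numerics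
  set n := Fintype.card (↥L ⧸ S') with hn
  have hnp : ¬ p ∣ n := by
    have e1 : (S : Subgroup G).relIndex L = n := by
      rw [Subgroup.relIndex, Subgroup.index_eq_card, Nat.card_eq_fintype_card]
    have e2 := Subgroup.relIndex_mul_index hSL
    have hSidx : ¬ p ∣ (S : Subgroup G).index := S.not_dvd_index' Nat.card_pos.ne'
    intro hdvd
    exact hSidx (e2 ▸ Dvd.dvd.mul_right (e1 ▸ hdvd) _)
  have hZsp : IsPGroup p Zs := S.2.to_le inf_le_left
  by_cases hq1 : Nat.card ↥Zs = 1
  · have hZbot : Zs = ⊥ := Subgroup.card_eq_one.mp hq1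
    have hWbot : W = ⊥ := le_bot_iff.mp (hZbot ▸ hWZs)
    refine ⟨W, ⊥, hWcar, bot_le, ?_, ?_⟩
    · rw [sup_bot_eq, hWbot, ← hZbot]
    · rw [inf_bot_eq]
  · obtain ⟨j, hj⟩ := IsPGroup.iff_card.mp hZsp
    have hcopnq : Nat.Coprime n (Nat.card ↥Zs) := by
      rw [hj]
      exact Nat.Coprime.pow_right j
        (Nat.Coprime.symm ((Nat.Prime.coprime_iff_not_dvd hp').mpr hnp))
    have h1lt : 1 < Nat.card ↥Zs := by
      have := Nat.card_pos (α := ↥Zs); omega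
    obtain ⟨E, -, hE⟩ := Nat.exists_mul_mod_eq_one_of_coprime hcopnq h1lt
    have hpowid : ∀ a : ↥Zs, a ^ (n * E) = a := by
      intro a
      have hcard : a ^ (Nat.card ↥Zs) = 1 := pow_card_eq_one'
      have h2 : n * E = Nat.card ↥Zs * (n * E / Nat.card ↥Zs) + 1 := by
        have h3 := Nat.div_add_mod (n * E) (Nat.card ↥Zs)
        omega
      rw [h2, pow_add, pow_mul, hcard, one_pow, one_mul, pow_one]
    set phi : ↥Zs →* ↥A := (powMonoidHom E : ↥A →* ↥A).comp tau with hphi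
    have hphinu : ∀ a : ↥Zs, phi a = (nu a) ^ E := fun a => rfl
    have hphiW : ∀ a : ↥Zs, (a : G) ∈ W → ((phi a : ↥A) : G) = a := by
      intro a ha
      rw [hphinu, hnuW a ha, ← pow_mul]
      have h6 := congrArg (Subtype.val) (hpowid a)
      push_cast at h6
      push_cast
      exact h6
    have hphimem : ∀ a : ↥Zs, ((phi a : ↥A) : G) ∈ W := by
      intro a
      have hAP : A ≤ P := inf_le_right
      have h1 : ((tau a : ↥A) : G) ∈ W :=
        Subgroup.mem_inf.mpr ⟨hnucent a, hAP (nu a).2⟩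
      have h2 : ((phi a : ↥A) : G) = ((tau a : ↥A) : G) ^ E := by
        rw [hphinu]; push_cast; rfl
      rw [h2]; exact pow_mem h1 E
    set K : Subgroup G := (MonoidHom.ker phi).map Zs.subtype with hK
    have hKZs : K ≤ Zs := Subgroup.map_subtype_le _
    refine ⟨W, K, hWcar, hKZs, ?_, ?_⟩
    · apply le_antisymm (sup_le hWZs hKZs)
      intro a ha
      set az : ↥Zs := ⟨a, ha⟩ with haz
      set w : G := ((phi az : ↥A) : G) with hw
      have hwW : w ∈ W := hphimem az
      have hwZs : w ∈ Zs := hWZs hwW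
      have hker : ((⟨w, hwZs⟩ : ↥Zs)⁻¹ * az : ↥Zs) ∈ MonoidHom.ker phi := by
        rw [MonoidHom.mem_ker, map_mul, map_inv]
        have h1 : phi ⟨w, hwZs⟩ = phi az := Subtype.ext (by rw [hphiW ⟨w, hwZs⟩ hwW])
        rw [h1, inv_mul_cancel]
      have haK : w⁻¹ * a ∈ K := ⟨_, hker, rfl⟩
      have h3 : a = w * (w⁻¹ * a) := by group
      rw [h3]
      exact mul_mem (Subgroup.mem_sup_left hwW) (Subgroup.mem_sup_right haK)
    · apply le_antisymm ?_ bot_le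
      intro x hx
      obtain ⟨hxW, hxK⟩ := Subgroup.mem_inf.mp hx
      obtain ⟨y, hy, hyx⟩ := hxK
      have hyx' : (y : G) = x := hyx
      have h1 : ((phi y : ↥A) : G) = x := by
        rw [hphiW y (by rw [hyx']; exact hxW)]
        exact hyx'
      have h2 : ((phi y : ↥A) : G) = 1 := by
        rw [MonoidHom.mem_ker.mp hy]; rfl
      rw [Subgroup.mem_bot, ← h1, h2]

end Part3

/-- If `G` is a finite solvable group with Sylow `p`-subgroup `S`, then `W_G(S)` is a
direct factor of `Z(S)`. -/
theorem weakly_closed_direct_factor_of_solvable {G : Type*} [Group G] [Finite G]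
    [Group.IsSolvable G] {p : ℕ} [Fact p.Prime] (S : Sylow p G) :
    ∃ W K : Subgroup G,
      (W : Set G) = {x : G | IsWeaklyClosed (S : Subgroup G) x} ∧
      K ≤ (S : Subgroup G) ⊓ Subgroup.centralizer (S : Set G) ∧
      W ⊔ K = (S : Subgroup G) ⊓ Subgroup.centralizer (S : Set G) ∧
      W ⊓ K = ⊥ := by
  obtain ⟨M, N, hgood⟩ := goodPair_exists (p := p) (Nat.card G) G le_rfl S
  exact part3 S hgood
end

section
/- Let G = A_6 ⋊ ⟨a⟩ where a has order 4 and acts on A_6 via conjugation by the transposition (5,6) in S_6. Let S = ⟨(1,3)(2,4), (1,2)(5,6), a⟩, a Sylow 2-subgroup of G, and let z = (1,2)(3,4). Then Z(S) = ⟨z, a⟩ ≅ C_2 × C_4, W_G(S) = ⟨a²⟩, and Z(S) does not split over W_G(S): there is no subgroup K ≤ Z(S) with Z(S) = ⟨a²⟩ × K. -/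
/-- The ambient group `S₆ × C₄`. -/
abbrev Amb := Equiv.Perm (Fin 6) × Multiplicative (ZMod 4)

/-- The character of `C₄` sending a generator to `-1`. -/
def χ : Multiplicative (ZMod 4) →* ℤˣ :=
  MonoidHom.mk' (fun k => (-1 : ℤˣ) ^ (Multiplicative.toAdd k).val) (by decide)

/-- The homomorphism `(σ, k) ↦ sign σ · (-1)^k`. Its kernel is the semidirect
product `G = A₆ ⋊ ⟨a⟩` where `a` has order 4 and acts on `A₆` via conjugation by
the transposition `(5,6)`: indeed `a := ((5,6), 1)` lies in the kernel, `a⁴ = 1`,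
`a² = (1, 2)` centralizes `A₆ × 1`, and conjugation by `a` on `A₆ × 1` is
conjugation by `(5,6)`. -/
def F : Amb →* ℤˣ :=
  (Equiv.Perm.sign.comp (MonoidHom.fst _ _)) * (χ.comp (MonoidHom.snd _ _))

/-- `G = A₆ ⋊ ⟨a⟩`. -/
def Gdef : Subgroup Amb := F.ker

/-- the element `a` of order 4 acting on `A₆` by conjugation by `(5,6)` -/
def aG : Gdef := ⟨(Equiv.swap 4 5, Multiplicative.ofAdd 1), by unfold Gdef; decide⟩

/-- the element `(1,3)(2,4)` -/
def xG : Gdef := ⟨(Equiv.swap 0 2 * Equiv.swap 1 3, 1), by unfold Gdef; decide⟩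

/-- the element `(1,2)(5,6)` -/
def yG : Gdef := ⟨(Equiv.swap 0 1 * Equiv.swap 4 5, 1), by unfold Gdef; decide⟩

/-- the element `z = (1,2)(3,4)` -/
def zG : Gdef := ⟨(Equiv.swap 0 1 * Equiv.swap 2 3, 1), by unfold Gdef; decide⟩

/-- `S = ⟨(1,3)(2,4), (1,2)(5,6), a⟩` -/
def Sdef : Subgroup Gdef := Subgroup.closure {xG, yG, aG}



/-! ### Auxiliary machinery -/

instance decMemG : DecidablePred (· ∈ Gdef) := fun x =>
  decidable_of_iff (F x = 1) (MonoidHom.mem_ker (f := F)).symm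

def sw (i j : Fin 6) : Equiv.Perm (Fin 6) := Equiv.swap i j
def Slist : List Amb := [
  ((1, Multiplicative.ofAdd 0)),
  ((sw 0 2 * sw 1 3, Multiplicative.ofAdd 0)),
  ((sw 0 1 * sw 4 5, Multiplicative.ofAdd 0)),
  ((sw 4 5, Multiplicative.ofAdd 1)),
  ((sw 0 3 * sw 3 1 * sw 1 2 * sw 4 5, Multiplicative.ofAdd 0)),
  ((sw 0 2 * sw 1 3 * sw 4 5, Multiplicative.ofAdd 1)),
  ((sw 0 2 * sw 2 1 * sw 1 3 * sw 4 5, Multiplicative.ofAdd 0)),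
  ((sw 0 1, Multiplicative.ofAdd 1)),
  ((1, Multiplicative.ofAdd 2)),
  ((sw 2 3 * sw 4 5, Multiplicative.ofAdd 0)),
  ((sw 0 3 * sw 3 1 * sw 1 2, Multiplicative.ofAdd 1)),
  ((sw 0 2 * sw 1 3, Multiplicative.ofAdd 2)),
  ((sw 0 3 * sw 1 2, Multiplicative.ofAdd 0)),
  ((sw 0 2 * sw 2 1 * sw 1 3, Multiplicative.ofAdd 1)),
  ((sw 0 1 * sw 4 5, Multiplicative.ofAdd 2)),
  ((sw 4 5, Multiplicative.ofAdd 3)),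
  ((sw 0 1 * sw 2 3, Multiplicative.ofAdd 0)),
  ((sw 2 3, Multiplicative.ofAdd 1)),
  ((sw 0 3 * sw 3 1 * sw 1 2 * sw 4 5, Multiplicative.ofAdd 2)),
  ((sw 0 2 * sw 1 3 * sw 4 5, Multiplicative.ofAdd 3)),
  ((sw 0 3 * sw 1 2 * sw 4 5, Multiplicative.ofAdd 1)),
  ((sw 0 2 * sw 2 1 * sw 1 3 * sw 4 5, Multiplicative.ofAdd 2)),
  ((sw 0 1, Multiplicative.ofAdd 3)),
  ((sw 0 1 * sw 2 3 * sw 4 5, Multiplicative.ofAdd 1)),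
  ((sw 2 3 * sw 4 5, Multiplicative.ofAdd 2)),
  ((sw 0 3 * sw 3 1 * sw 1 2, Multiplicative.ofAdd 3)),
  ((sw 0 3 * sw 1 2, Multiplicative.ofAdd 2)),
  ((sw 0 2 * sw 2 1 * sw 1 3, Multiplicative.ofAdd 3)),
  ((sw 0 1 * sw 2 3, Multiplicative.ofAdd 2)),
  ((sw 2 3, Multiplicative.ofAdd 3)),
  ((sw 0 3 * sw 1 2 * sw 4 5, Multiplicative.ofAdd 3)),
  ((sw 0 1 * sw 2 3 * sw 4 5, Multiplicative.ofAdd 3))]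
def Zlist : List Amb := [
  ((1, Multiplicative.ofAdd 0)),
  ((sw 0 1 * sw 2 3, Multiplicative.ofAdd 0)),
  ((sw 4 5, Multiplicative.ofAdd 1)),
  ((sw 0 1 * sw 2 3 * sw 4 5, Multiplicative.ofAdd 1)),
  ((1, Multiplicative.ofAdd 2)),
  ((sw 0 1 * sw 2 3, Multiplicative.ofAdd 2)),
  ((sw 4 5, Multiplicative.ofAdd 3)),
  ((sw 0 1 * sw 2 3 * sw 4 5, Multiplicative.ofAdd 3))]
def Swords : List (List (Fin 3)) := [[], [0], [1], [2], [0, 1], [0, 2], [1, 0], [1, 2], [2, 2], [0, 1, 0], [0, 1, 2], [0, 2, 2], [1, 0, 1], [1, 0, 2], [1, 2, 2], [2, 2, 2], [0, 1, 0, 1], [0, 1, 0, 2], [0, 1, 2, 2], [0, 2, 2, 2], [1, 0, 1, 2], [1, 0, 2, 2], [1, 2, 2, 2], [0, 1, 0, 1, 2], [0, 1, 0, 2, 2], [0, 1, 2, 2, 2], [1, 0, 1, 2, 2], [1, 0, 2, 2, 2], [0, 1, 0, 1, 2, 2], [0, 1, 0, 2, 2, 2], [1, 0, 1, 2, 2,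 2], [0, 1, 0, 1, 2, 2, 2]]
def Zwords : List (List (Fin 2)) := [[], [0], [1], [0, 1], [1, 1], [0, 1, 1], [1, 1, 1], [0, 1, 1, 1]]
def witList : List (Amb × Amb) := [
  (((sw 0 2 * sw 1 3, Multiplicative.ofAdd 0)), ((sw 2 3, Multiplicative.ofAdd 1))),
  (((sw 0 1 * sw 4 5, Multiplicative.ofAdd 0)), ((sw 2 4 * sw 3 5, Multiplicative.ofAdd 0))),
  (((sw 4 5, Multiplicative.ofAdd 1)), ((sw 2 4 * sw 3 5, Multiplicative.ofAdd 0))),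
  (((sw 0 3 * sw 3 1 * sw 1 2 * sw 4 5, Multiplicative.ofAdd 0)), ((sw 2 3, Multiplicative.ofAdd 1))),
  (((sw 0 2 * sw 1 3 * sw 4 5, Multiplicative.ofAdd 1)), ((sw 2 3, Multiplicative.ofAdd 1))),
  (((sw 0 2 * sw 2 1 * sw 1 3 * sw 4 5, Multiplicative.ofAdd 0)), ((sw 2 3, Multiplicative.ofAdd 1))),
  (((sw 0 1, Multiplicative.ofAdd 1)), ((sw 0 2 * sw 1 3, Multiplicative.ofAdd 0))),
  (((sw 2 3 * sw 4 5, Multiplicative.ofAdd 0)), ((sw 0 2 * sw 1 3, Multiplicative.ofAdd 0))),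
  (((sw 0 3 * sw 3 1 * sw 1 2, Multiplicative.ofAdd 1)), ((sw 2 3, Multiplicative.ofAdd 1))),
  (((sw 0 2 * sw 1 3, Multiplicative.ofAdd 2)), ((sw 2 3, Multiplicative.ofAdd 1))),
  (((sw 0 3 * sw 1 2, Multiplicative.ofAdd 0)), ((sw 2 3, Multiplicative.ofAdd 1))),
  (((sw 0 2 * sw 2 1 * sw 1 3, Multiplicative.ofAdd 1)), ((sw 2 3, Multiplicative.ofAdd 1))),
  (((sw 0 1 * sw 4 5, Multiplicative.ofAdd 2)), ((sw 2 4 * sw 3 5, Multiplicative.ofAdd 0))),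
  (((sw 4 5, Multiplicative.ofAdd 3)), ((sw 2 4 * sw 3 5, Multiplicative.ofAdd 0))),
  (((sw 0 1 * sw 2 3, Multiplicative.ofAdd 0)), ((sw 2 4 * sw 3 5, Multiplicative.ofAdd 0))),
  (((sw 2 3, Multiplicative.ofAdd 1)), ((sw 2 4 * sw 3 5, Multiplicative.ofAdd 0))),
  (((sw 0 3 * sw 3 1 * sw 1 2 * sw 4 5, Multiplicative.ofAdd 2)), ((sw 2 3, Multiplicative.ofAdd 1))),
  (((sw 0 2 * sw 1 3 * sw 4 5, Multiplicative.ofAdd 3)), ((sw 2 3, Multiplicative.ofAdd 1))),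
  (((sw 0 3 * sw 1 2 * sw 4 5, Multiplicative.ofAdd 1)), ((sw 2 3, Multiplicative.ofAdd 1))),
  (((sw 0 2 * sw 2 1 * sw 1 3 * sw 4 5, Multiplicative.ofAdd 2)), ((sw 2 3, Multiplicative.ofAdd 1))),
  (((sw 0 1, Multiplicative.ofAdd 3)), ((sw 0 2 * sw 1 3, Multiplicative.ofAdd 0))),
  (((sw 0 1 * sw 2 3 * sw 4 5, Multiplicative.ofAdd 1)), ((sw 1 2, Multiplicative.ofAdd 1))),
  (((sw 2 3 * sw 4 5, Multiplicative.ofAdd 2)), ((sw 0 2 * sw 1 3, Multiplicative.ofAdd 0))),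
  (((sw 0 3 * sw 3 1 * sw 1 2, Multiplicative.ofAdd 3)), ((sw 2 3, Multiplicative.ofAdd 1))),
  (((sw 0 3 * sw 1 2, Multiplicative.ofAdd 2)), ((sw 2 3, Multiplicative.ofAdd 1))),
  (((sw 0 2 * sw 2 1 * sw 1 3, Multiplicative.ofAdd 3)), ((sw 2 3, Multiplicative.ofAdd 1))),
  (((sw 0 1 * sw 2 3, Multiplicative.ofAdd 2)), ((sw 2 4 * sw 3 5, Multiplicative.ofAdd 0))),
  (((sw 2 3, Multiplicative.ofAdd 3)), ((sw 2 4 * sw 3 5, Multiplicative.ofAdd 0))),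
  (((sw 0 3 * sw 1 2 * sw 4 5, Multiplicative.ofAdd 3)), ((sw 2 3, Multiplicative.ofAdd 1))),
  (((sw 0 1 * sw 2 3 * sw 4 5, Multiplicative.ofAdd 3)), ((sw 1 2, Multiplicative.ofAdd 1)))]

/-- list of all elements of `Multiplicative (ZMod 2 × ZMod 4)` -/
def Mlist : List (Multiplicative (ZMod 2 × ZMod 4)) :=
  [Multiplicative.ofAdd (0, 0), Multiplicative.ofAdd (0, 1),
   Multiplicative.ofAdd (0, 2), Multiplicative.ofAdd (0, 3),
   Multiplicative.ofAdd (1, 0), Multiplicative.ofAdd (1, 1),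
   Multiplicative.ofAdd (1, 2), Multiplicative.ofAdd (1, 3)]

def gfun : Fin 3 → Amb := ![(xG : Amb), (yG : Amb), (aG : Amb)]
def zfun : Fin 2 → Amb := ![(zG : Amb), (aG : Amb)]
def gG : Fin 3 → Gdef := ![xG, yG, aG]
def zGf : Fin 2 → Gdef := ![zG, aG]

def xA : Amb := (xG : Amb)
def yA : Amb := (yG : Amb)
def aA : Amb := (aG : Amb)
def a2A : Amb := (1, Multiplicative.ofAdd 2)

def uM (p : Multiplicative (ZMod 2 × ZMod 4)) : Amb :=
  (zG : Amb) ^ (Multiplicative.toAdd p).1.val * (aG : Amb) ^ (Multiplicative.toAdd p).2.val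

theorem ball_of_allb {α : Type*} {l : List α} {p : α → Prop} [DecidablePred p]
    (h : (l.all fun a => decide (p a)) = true) : ∀ a ∈ l, p a :=
  fun a ha => of_decide_eq_true (List.all_eq_true.1 h a ha)

set_option maxRecDepth 100000
set_option maxHeartbeats 12000000

theorem B1 : (Slist.all fun u => Slist.all fun v => decide (u * v ∈ Slist)) = true := by decide
theorem B2 : (Slist.all fun u => decide (u⁻¹ ∈ Slist)) = true := by decide
theorem B3 : (1 : Amb) ∈ Slist := by decide
theorem B4 : (Slist.all fun v => decide (F v = 1)) = true := by decide
theorem B5 : (Slist.all fun v => Swords.any fun w => decide ((w.map gfun).prod = v)) = true := by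
  decide
theorem B6 : (Zlist.all fun v => Zwords.any fun w => decide ((w.map zfun).prod = v)) = true := by
  decide
theorem B7 : (Zlist.all fun v =>
    decide (v ∈ Slist ∧ xA * v = v * xA ∧ yA * v = v * yA ∧ aA * v = v * aA)) = true := by decide
theorem B8 : (Slist.all fun v =>
    decide ((xA * v = v * xA ∧ yA * v = v * yA ∧ aA * v = v * aA) → v ∈ Zlist)) = true := by
  decide
theorem B9 : (witList.all fun p =>
    decide (F p.2 = 1 ∧ p.2⁻¹ * p.1 * p.2 ∈ Slist ∧ p.2⁻¹ * p.1 * p.2 ≠ p.1)) = true := by decide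
theorem B10 : (Slist.all fun v =>
    decide (v = 1) || decide (v = a2A) || (witList.any fun p => decide (p.1 = v))) = true := by
  decide
theorem B11 : (Zlist.all fun v => Mlist.any fun p => decide (uM p = v)) = true := by decide
theorem B12 : (Zlist.all fun u => Zlist.all fun v => decide (u * v ∈ Zlist)) = true := by decide
theorem B13 : (Zlist.all fun u => decide (u⁻¹ ∈ Zlist)) = true := by decide
theorem B14 : (1 : Amb) ∈ Zlist := by decide

theorem PmulS : ∀ u ∈ Slist, ∀ v ∈ Slist, u * v ∈ Slist := fun u hu =>
  ball_of_allb (List.all_eq_true.1 B1 u hu)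
theorem PinvS : ∀ u ∈ Slist, u⁻¹ ∈ Slist := ball_of_allb B2
theorem PSG : ∀ v ∈ Slist, F v = 1 := ball_of_allb B4
theorem PwordS : ∀ v ∈ Slist, ∃ w ∈ Swords, (w.map gfun).prod = v := by
  intro v hv
  obtain ⟨w, hw, he⟩ := List.any_eq_true.1 (List.all_eq_true.1 B5 v hv)
  exact ⟨w, hw, of_decide_eq_true he⟩
theorem PwordZ : ∀ v ∈ Zlist, ∃ w ∈ Zwords, (w.map zfun).prod = v := by
  intro v hv
  obtain ⟨w, hw, he⟩ := List.any_eq_true.1 (List.all_eq_true.1 B6 v hv)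
  exact ⟨w, hw, of_decide_eq_true he⟩
theorem PZprops : ∀ v ∈ Zlist,
    v ∈ Slist ∧ xA * v = v * xA ∧ yA * v = v * yA ∧ aA * v = v * aA := ball_of_allb B7
theorem PcentZ : ∀ v ∈ Slist,
    (xA * v = v * xA ∧ yA * v = v * yA ∧ aA * v = v * aA) → v ∈ Zlist := ball_of_allb B8
theorem Pwit1 : ∀ p ∈ witList,
    F p.2 = 1 ∧ p.2⁻¹ * p.1 * p.2 ∈ Slist ∧ p.2⁻¹ * p.1 * p.2 ≠ p.1 := ball_of_allb B9
theorem Pwit2 : ∀ v ∈ Slist, v = 1 ∨ v = a2A ∨ ∃ p ∈ witList, p.1 = v := by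
  intro v hv
  have h := List.all_eq_true.1 B10 v hv
  rcases Bool.or_eq_true_iff.1 h with h' | h'
  · rcases Bool.or_eq_true_iff.1 h' with h'' | h''
    · exact Or.inl (of_decide_eq_true h'')
    · exact Or.inr (Or.inl (of_decide_eq_true h''))
  · obtain ⟨p, hp, he⟩ := List.any_eq_true.1 h'
    exact Or.inr (Or.inr ⟨p, hp, of_decide_eq_true he⟩)
theorem PfindM : ∀ v ∈ Zlist, ∃ p : Multiplicative (ZMod 2 × ZMod 4), uM p = v := by
  intro v hv
  obtain ⟨p, _, he⟩ := List.any_eq_true.1 (List.all_eq_true.1 B11 v hv)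
  exact ⟨p, of_decide_eq_true he⟩
theorem PmulZ : ∀ u ∈ Zlist, ∀ v ∈ Zlist, u * v ∈ Zlist := fun u hu =>
  ball_of_allb (List.all_eq_true.1 B12 u hu)
theorem PinvZ : ∀ u ∈ Zlist, u⁻¹ ∈ Zlist := ball_of_allb B13

/-- `S` as an explicitly listed subgroup. -/
def S' : Subgroup Gdef where
  carrier := {g | (g : Amb) ∈ Slist}
  one_mem' := B3
  mul_mem' := fun {a b} ha hb => PmulS _ ha _ hb
  inv_mem' := fun {a} ha => PinvS _ ha

/-- `Z(S)` as an explicitly listed subgroup. -/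
def Z' : Subgroup Gdef where
  carrier := {g | (g : Amb) ∈ Zlist}
  one_mem' := B14
  mul_mem' := fun {a b} ha hb => PmulZ _ ha _ hb
  inv_mem' := fun {a} ha => PinvZ _ ha

theorem hgG : ∀ i, gG i ∈ Sdef := by
  intro i
  fin_cases i <;> apply Subgroup.subset_closure <;> simp [gG]

theorem hzGf : ∀ i, zGf i ∈ Subgroup.closure ({zG, aG} : Set Gdef) := by
  intro i
  fin_cases i <;> apply Subgroup.subset_closure <;> simp [zGf]

theorem hSdef : Sdef = S' := by
  apply le_antisymm
  · refine (Subgroup.closure_le _).2 ?_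
    intro g hg
    rcases hg with rfl | rfl | rfl
    · show (xG : Amb) ∈ Slist; decide
    · show (yG : Amb) ∈ Slist; decide
    · show (aG : Amb) ∈ Slist; decide
  · intro g hg
    obtain ⟨w, _, hprod⟩ := PwordS _ hg
    have hmem : (w.map gG).prod ∈ Sdef := by
      apply Subgroup.list_prod_mem
      intro x hx
      obtain ⟨i, _, rfl⟩ := List.mem_map.1 hx
      exact hgG i
    have hcoe : (((w.map gG).prod : Gdef) : Amb) = (w.map gfun).prod := by
      rw [SubmonoidClass.coe_list_prod, List.map_map]
      congr 1
      apply List.map_congr_left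
      intro i _
      show ((gG i : Gdef) : Amb) = gfun i
      fin_cases i <;> rfl
    have : (w.map gG).prod = g := Subtype.ext (hcoe.trans hprod)
    rwa [this] at hmem

theorem hZdef : Subgroup.closure ({zG, aG} : Set Gdef) = Z' := by
  apply le_antisymm
  · refine (Subgroup.closure_le _).2 ?_
    intro g hg
    rcases hg with rfl | rfl
    · show (zG : Amb) ∈ Zlist; decide
    · show (aG : Amb) ∈ Zlist; decide
  · intro g hg
    obtain ⟨w, _, hprod⟩ := PwordZ _ hg
    have hmem : (w.map zGf).prod ∈ Subgroup.closure ({zG, aG} : Set Gdef) := by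
      apply Subgroup.list_prod_mem
      intro x hx
      obtain ⟨i, _, rfl⟩ := List.mem_map.1 hx
      exact hzGf i
    have hcoe : (((w.map zGf).prod : Gdef) : Amb) = (w.map zfun).prod := by
      rw [SubmonoidClass.coe_list_prod, List.map_map]
      congr 1
      apply List.map_congr_left
      intro i _
      show ((zGf i : Gdef) : Amb) = zfun i
      fin_cases i <;> rfl
    have : (w.map zGf).prod = g := Subtype.ext (hcoe.trans hprod)
    rwa [this] at hmem

theorem memCentZpow {G : Type*} [Group G] {g x : G} :
    x ∈ Subgroup.centralizer (Subgroup.zpowers g : Set G) ↔ g * x = x * g := by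
  rw [Subgroup.mem_centralizer_iff]
  constructor
  · intro h
    exact h g (Subgroup.mem_zpowers g)
  · intro h k hk
    obtain ⟨n, rfl⟩ := Subgroup.mem_zpowers_iff.1 (SetLike.mem_coe.1 hk)
    exact ((show Commute g x from h).zpow_left n).eq

theorem hcentmem (x : Gdef) : x ∈ Subgroup.centralizer (Sdef : Set Gdef) ↔
    (xG * x = x * xG ∧ yG * x = x * yG ∧ aG * x = x * aG) := by
  show x ∈ Subgroup.centralizer ((Subgroup.closure {xG, yG, aG} : Subgroup Gdef) : Set Gdef) ↔ _
  rw [Subgroup.centralizer_closure]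
  simp only [Subgroup.mem_centralizer_iff, Subgroup.mem_iInf, Set.mem_insert_iff, Set.mem_singleton_iff,
    forall_eq_or_imp, forall_eq, memCentZpow]

theorem hZSC : Sdef ⊓ Subgroup.centralizer (Sdef : Set Gdef) = Z' := by
  ext x
  rw [Subgroup.mem_inf, hcentmem x]
  constructor
  · rintro ⟨hxS, h1, h2, h3⟩
    have hv : (x : Amb) ∈ Slist := by rw [hSdef] at hxS; exact hxS
    exact PcentZ _ hv ⟨congrArg Subtype.val h1, congrArg Subtype.val h2, congrArg Subtype.val h3⟩
  · intro hxZ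
    obtain ⟨hS, c1, c2, c3⟩ := PZprops _ hxZ
    exact ⟨by rw [hSdef]; exact hS, Subtype.ext c1, Subtype.ext c2, Subtype.ext c3⟩

theorem huF : ∀ p : Multiplicative (ZMod 2 × ZMod 4), F (uM p) = 1 := by decide
theorem huZ : ∀ p : Multiplicative (ZMod 2 × ZMod 4), uM p ∈ Zlist := by decide

def phi0 (p : Multiplicative (ZMod 2 × ZMod 4)) : Z' :=
  ⟨⟨uM p, (MonoidHom.mem_ker (f := F)).2 (huF p)⟩, huZ p⟩

theorem hphimul : ∀ p q : Multiplicative (ZMod 2 × ZMod 4),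
    phi0 (p * q) = phi0 p * phi0 q := by decide
theorem hphiinj' : ∀ p q : Multiplicative (ZMod 2 × ZMod 4),
    phi0 p = phi0 q → p = q := by decide

def phiHom : Multiplicative (ZMod 2 × ZMod 4) →* Z' :=
  MonoidHom.mk' phi0 hphimul

theorem hphisurj : Function.Surjective phi0 := by
  rintro ⟨⟨v, hvG⟩, hvZ⟩
  obtain ⟨p, hp⟩ := PfindM v hvZ
  exact ⟨p, Subtype.ext (Subtype.ext hp)⟩

noncomputable def eIso : Multiplicative (ZMod 2 × ZMod 4) ≃* Z' :=
  MulEquiv.ofBijective phiHom ⟨fun {p q} h => hphiinj' p q h, hphisurj⟩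

theorem hcomm : ∀ g : Gdef, g * aG ^ 2 = aG ^ 2 * g := by
  intro g
  apply Subtype.ext
  show (g : Amb) * ((aG : Amb)) ^ 2 = ((aG : Amb)) ^ 2 * (g : Amb)
  have h2 : ((aG : Amb)) ^ 2 = ((1 : Equiv.Perm (Fin 6)), Multiplicative.ofAdd (2 : ZMod 4)) := by
    decide
  rw [h2]
  obtain ⟨⟨p, k⟩, hg⟩ := g
  exact Prod.ext (by simp) (mul_comm _ _)

theorem hcentral : ∀ g : Gdef, g⁻¹ * aG ^ 2 * g = aG ^ 2 := by
  intro g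
  rw [mul_assoc, ← hcomm g, ← mul_assoc, inv_mul_cancel, one_mul]

instance instNzp : (Subgroup.zpowers (aG ^ 2)).Normal := by
  constructor
  intro n hn g
  obtain ⟨m, rfl⟩ := Subgroup.mem_zpowers_iff.1 hn
  have hc : Commute g ((aG ^ 2) ^ m) := (show Commute g (aG ^ 2) from hcomm g).zpow_right m
  have : g * (aG ^ 2) ^ m * g⁻¹ = (aG ^ 2) ^ m := by
    rw [hc.eq, mul_assoc, mul_inv_cancel, mul_one]
  rw [this]
  exact Subgroup.mem_zpowers_iff.2 ⟨m, rfl⟩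

theorem ha2sqZ : (aG ^ 2) ^ (2 : ℤ) = 1 := by
  have h2n : (aG ^ 2) ^ (2 : ℕ) = (1 : Gdef) := Subtype.ext (by decide)
  rw [show (2 : ℤ) = ((2 : ℕ) : ℤ) from rfl, zpow_natCast]
  exact h2n

theorem hzpow (x : Gdef) : x ∈ Subgroup.zpowers (aG ^ 2) ↔ (x = 1 ∨ x = aG ^ 2) := by
  constructor
  · intro hx
    obtain ⟨n, rfl⟩ := Subgroup.mem_zpowers_iff.1 hx
    rcases Int.even_or_odd n with ⟨m, rfl⟩ | ⟨m, rfl⟩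
    · left
      rw [show m + m = 2 * m by ring, zpow_mul, ha2sqZ, one_zpow]
    · right
      rw [zpow_add, zpow_mul, ha2sqZ, one_zpow, one_mul, zpow_one]
  · rintro (rfl | rfl)
    · exact Subgroup.one_mem _
    · exact Subgroup.mem_zpowers _

/-- In `G = A₆ ⋊ ⟨a⟩`, the subgroup `S = ⟨(1,3)(2,4), (1,2)(5,6), a⟩` is a Sylow
2-subgroup, `Z(S) = ⟨z, a⟩ ≅ C₂ × C₄` where `z = (1,2)(3,4)`, the weakly closed
elements form `W_G(S) = ⟨a²⟩`, and `Z(S)` does not split over `W_G(S)`. -/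
theorem A6_example :
    (∃ T : Sylow 2 Gdef, (T : Subgroup Gdef) = Sdef) ∧
    Sdef ⊓ Subgroup.centralizer (Sdef : Set Gdef) = Subgroup.closure {zG, aG} ∧
    Nonempty (↥(Sdef ⊓ Subgroup.centralizer (Sdef : Set Gdef)) ≃*
      Multiplicative (ZMod 2 × ZMod 4)) ∧
    {x : Gdef | IsWeaklyClosed Sdef x} = ↑(Subgroup.zpowers (aG ^ 2)) ∧
    ¬ ∃ K : Subgroup Gdef, K ≤ Sdef ⊓ Subgroup.centralizer (Sdef : Set Gdef) ∧
        Subgroup.zpowers (aG ^ 2) ⊔ K = Sdef ⊓ Subgroup.centralizer (Sdef : Set Gdef) ∧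
        Subgroup.zpowers (aG ^ 2) ⊓ K = ⊥ := by
  have hcardS : Nat.card ↥Sdef = 32 := by
    rw [hSdef]
    have e : ↥S' ≃ {v : Amb // v ∈ Slist.toFinset} :=
      { toFun := fun x => ⟨(x.1 : Amb), List.mem_toFinset.2 x.2⟩
        invFun := fun v => ⟨⟨v.1, (MonoidHom.mem_ker (f := F)).2 (PSG v.1 (List.mem_toFinset.1 v.2))⟩,
          List.mem_toFinset.1 v.2⟩
        left_inv := fun x => by apply Subtype.ext; apply Subtype.ext; rfl
        right_inv := fun v => rfl }
    rw [Nat.card_congr e, Nat.card_eq_fintype_card, Fintype.card_coe]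
    decide
  have hcardG : Nat.card Gdef = 1440 := by
    have hAmb : Nat.card Amb = 2880 := by
      rw [Nat.card_eq_fintype_card]
      simp only [Fintype.card_prod, Fintype.card_perm, Fintype.card_fin]
      rfl
    have hsurj : Function.Surjective F := by
      intro u
      rcases Int.units_eq_one_or u with rfl | rfl
      · exact ⟨1, map_one F⟩
      · exact ⟨(Equiv.swap 0 1, 1), by decide⟩
    have hquot : Nat.card (Amb ⧸ Gdef) = 2 := by
      calc Nat.card (Amb ⧸ Gdef) = Nat.card F.range :=
            Nat.card_congr (QuotientGroup.quotientKerEquivRange F).toEquiv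
        _ = Nat.card ℤˣ := by
            rw [MonoidHom.range_eq_top_of_surjective F hsurj]
            exact Nat.card_congr Subgroup.topEquiv.toEquiv
        _ = 2 := by rw [Nat.card_eq_fintype_card]; rfl
    have hprod := Subgroup.card_eq_card_quotient_mul_card_subgroup Gdef
    rw [hAmb, hquot] at hprod
    omega
  have hfact : (Nat.card Gdef).factorization 2 = 5 := by
    rw [hcardG]
    have h1 : 5 ≤ (1440 : ℕ).factorization 2 :=
      (Nat.Prime.pow_dvd_iff_le_factorization Nat.prime_two (by norm_num)).1 (by norm_num)
    have h2 : ¬ 6 ≤ (1440 : ℕ).factorization 2 := fun h =>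
      absurd ((Nat.Prime.pow_dvd_iff_le_factorization Nat.prime_two (by norm_num)).2 h)
        (by norm_num)
    omega
  refine ⟨?_, ?_, ?_, ?_, ?_⟩
  · -- Sylow
    have card_eq : Nat.card ↥Sdef = 2 ^ (Nat.card Gdef).factorization 2 := by
      rw [hcardS, hfact]; norm_num
    exact ⟨Sylow.ofCard Sdef card_eq, rfl⟩
  · exact hZSC.trans hZdef.symm
  · exact ⟨(MulEquiv.subgroupCongr hZSC).trans eIso.symm⟩
  · -- weakly closed elements
    ext x
    simp only [Set.mem_setOf_eq, SetLike.mem_coe]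
    rw [hzpow]
    constructor
    · rintro ⟨hxS, hconj⟩
      have hv : (x : Amb) ∈ Slist := by rw [hSdef] at hxS; exact hxS
      rcases Pwit2 _ hv with h | h | ⟨p, hpmem, hp1⟩
      · left; exact Subtype.ext h
      · right
        refine Subtype.ext (h.trans ?_)
        decide
      · exfalso
        obtain ⟨hF2, hcin, hne⟩ := Pwit1 p hpmem
        set g : Gdef := ⟨p.2, (MonoidHom.mem_ker (f := F)).2 hF2⟩ with hgdef
        have hgm : g⁻¹ * x * g ∈ Sdef := by
          rw [hSdef]
          show ((g⁻¹ * x * g : Gdef) : Amb) ∈ Slist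
          have hc : ((g⁻¹ * x * g : Gdef) : Amb) = p.2⁻¹ * (x : Amb) * p.2 := rfl
          rw [hc, ← hp1]
          exact hcin
        have heq := hconj g hgm
        apply hne
        have hcoe : p.2⁻¹ * (x : Amb) * p.2 = (x : Amb) := congrArg Subtype.val heq
        rw [hp1]
        exact hcoe
    · rintro (rfl | rfl)
      · exact ⟨Subgroup.one_mem _, fun g h => by simp⟩
      · refine ⟨?_, fun g _ => hcentral g⟩
        rw [hSdef]
        show ((aG ^ 2 : Gdef) : Amb) ∈ Slist
        decide
  · -- no splitting
    rintro ⟨K, -, hsup, hinf⟩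
    have haZ : aG ∈ Sdef ⊓ Subgroup.centralizer (Sdef : Set Gdef) := by
      rw [hZSC]
      show (aG : Amb) ∈ Zlist
      decide
    have h1 : (aG : Gdef) ∈ ((Subgroup.zpowers (aG ^ 2) ⊔ K : Subgroup Gdef) : Set Gdef) := by
      rw [hsup]; exact haZ
    rw [Subgroup.normal_mul] at h1
    obtain ⟨n, hn, k, hk, hnk⟩ := h1
    have hnk' : n * k = aG := hnk
    have hn' := (hzpow n).1 hn
    have hKa2 : aG ^ 2 ∈ K := by
      rcases hn' with rfl | rfl
      · rw [one_mul] at hnk'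
        rw [pow_two, ← hnk']
        exact K.mul_mem hk hk
      · have hstep : k = (aG ^ 2)⁻¹ * aG := eq_inv_mul_of_mul_eq hnk'
        have hk' : k = aG⁻¹ := hstep.trans (Subtype.ext (by decide))
        subst hk'
        have h2 : aG ^ 2 = aG⁻¹ * aG⁻¹ := Subtype.ext (by decide)
        rw [h2]
        exact K.mul_mem hk hk
    have hmem : aG ^ 2 ∈ Subgroup.zpowers (aG ^ 2) ⊓ K := ⟨Subgroup.mem_zpowers _, hKa2⟩
    rw [hinf] at hmem
    have h0 : aG ^ 2 = 1 := Subgroup.mem_bot.1 hmem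
    exact absurd (congrArg Subtype.val h0) (by decide)
end
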